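/- arXiv:2407.18785 — 13 statements merged into one kernel-verified Lean document; each statement's English description precedes it below -/
import Mathlib

section
/- If S is an integer and x = [x_1,...,x_m] is a nonempty multiset of integers of cardinality m ≥ 1 such that x_1 + ... + x_m ≤ S, then D(m,S) is weakly supermajorized by x; that is, for every k with 1 ≤ k ≤ m, the sum of the k smallest elements of D(m,S) is at least the sum of the k smallest elements of x. -/
/-- The sum of the `k` smallest elements of a multiset of integers. -/
def sumKSmallest (x : Multiset ℤ) (k : ℕ) : ℤ :=
  ((x.sort (· ≤ ·)).take k).sum

theorem List.sum_le_sum_of_forall_mem_le {α : Type*} [AddMonoid α] [Preorder α]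
    [AddLeftMono α] [AddRightMono α] :
    ∀ {u v : List α}, u.length = v.length → (∀ y ∈ u, ∀ z ∈ v, y ≤ z) → u.sum ≤ v.sum
  | [], [], _, _ => le_rfl
  | y :: u, z :: v, hlen, h => by
    rw [List.sum_cons, List.sum_cons]
    exact add_le_add (h y List.mem_cons_self z List.mem_cons_self)
      (sum_le_sum_of_forall_mem_le (by simpa using hlen)
        fun a ha b hb => h a (List.mem_cons_of_mem _ ha) b (List.mem_cons_of_mem _ hb))

theorem List.Pairwise.forall_mem_take_le_forall_mem_drop {α : Type*} [Preorder α] {l : List α}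
    (hl : l.Pairwise (· ≤ ·)) (k : ℕ) : ∀ y ∈ l.take k, ∀ z ∈ l.drop k, y ≤ z := by
  rw [← List.take_append_drop k l, List.pairwise_append] at hl
  exact hl.2.2

/-- Were `(l.take k).sum` larger, no entry `z` of `l.drop k` could lie below an entry `w` of
`l'.drop k`: otherwise all of `l.take k` is `≤ z ≤ w - 1`, hence, by the spread condition, below
all of `l'.take k`. So the tail of `l` dominates the tail of `l'`, and the total sums give the
contradiction. -/
theorem sum_take_le_sum_take_of_spread_le_one {l l' : List ℤ} (hl : l.Pairwise (· ≤ ·))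
    (hlen : l.length = l'.length) (hsum : l.sum ≤ l'.sum)
    (hspread : ∀ a ∈ l', ∀ b ∈ l', a ≤ b + 1) (k : ℕ) :
    (l.take k).sum ≤ (l'.take k).sum := by
  have hsplit := hl.forall_mem_take_le_forall_mem_drop k
  by_contra! hlt
  have htail : ∀ w ∈ l'.drop k, ∀ z ∈ l.drop k, w ≤ z := by
    intro w hw z hz
    by_contra! hzw
    refine hlt.not_ge (List.sum_le_sum_of_forall_mem_le (by simp [hlen]) fun y hy p hp => ?_)
    have := hspread w (List.mem_of_mem_drop hw) p (List.mem_of_mem_take hp)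
    have := hsplit y hy z hz
    omega
  have := List.sum_le_sum_of_forall_mem_le (by simp [hlen]) htail
  rw [← List.sum_take_add_sum_drop l k, ← List.sum_take_add_sum_drop l' k] at hsum
  omega

theorem stmt_2_general (m : ℕ) (S : ℤ) (x : Multiset ℤ)
    (hx : x.card = m) (hsum : x.sum ≤ S)
    (D : Multiset ℤ) (hDcard : D.card = m) (hDsum : D.sum = S)
    (hDspread : ∀ a ∈ D, ∀ b ∈ D, a ≤ b + 1) :
    ∀ k : ℕ, 1 ≤ k → k ≤ m → sumKSmallest x k ≤ sumKSmallest D k := by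
  intro k _ _
  refine sum_take_le_sum_take_of_spread_le_one (x.pairwise_sort _) ?_ ?_ ?_ k
  · simp [hx, hDcard]
  · rwa [← Multiset.sum_coe, ← Multiset.sum_coe, Multiset.sort_eq, Multiset.sort_eq, hDsum]
  · simpa only [Multiset.mem_sort] using hDspread

/-- If `x` is a multiset of `m ≥ 1` integers whose sum is at most `S`, then `D(m,S)`
(the unique multiset of `m` integers summing to `S` with spread at most one) is weakly
supermajorized by `x`: for every `1 ≤ k ≤ m`, the sum of the `k` smallest elements of
`D(m,S)` is at least the sum of the `k` smallest elements of `x`. -/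
theorem stmt_2 (m : ℕ) (hm : 1 ≤ m) (S : ℤ) (x : Multiset ℤ)
    (hx : x.card = m) (hsum : x.sum ≤ S)
    (D : Multiset ℤ) (hDcard : D.card = m) (hDsum : D.sum = S)
    (hDspread : ∀ a ∈ D, ∀ b ∈ D, a ≤ b + 1) :
    ∀ k : ℕ, 1 ≤ k → k ≤ m → sumKSmallest x k ≤ sumKSmallest D k :=
  stmt_2_general m S x hx hsum D hDcard hDsum hDspread
end

section
/- Let I ⊆ ℝ be an interval and g : I → ℝ be strictly decreasing and strictly convex on I. Define φ(x) = Σ_{i=1}^n g(x_i) for x ∈ I^n. Then for all x, y ∈ I^n, if x is weakly supermajorized by y and x is not a permutation of y, then φ(x) < φ(y). -/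
/-- The sum of the `k` smallest components of `x : Fin n → ℝ` (the first `k` entries of the
monotone rearrangement of `x`). -/
noncomputable def sumSmallest {n : ℕ} (x : Fin n → ℝ) (k : ℕ) : ℝ :=
  ∑ i ∈ Finset.univ.filter (fun i : Fin n => (i : ℕ) < k), x (Tuple.sort x i)

/-- `x` is weakly supermajorized by `y`: for each `k = 1,...,n` the sum of the `k` smallest
components of `x` is at least that of `y`. -/
def WeaklySupermajorizedBy {n : ℕ} (x y : Fin n → ℝ) : Prop :=
  ∀ k : ℕ, 1 ≤ k → k ≤ n → sumSmallest y k ≤ sumSmallest x k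

/-!
Sort both tuples increasingly into `a` and `b`. Where `a i ≠ b i`, let `c i` be the slope of `g`
over the half of `[a i, b i]` adjacent to `a i`. Strict convexity gives
`g (b i) - g (a i) > c i * (b i - a i)`; taking only half of the interval is what makes this strict.
As both endpoints of the half interval increase with `i`, so does `c i`, and `c i < 0` because `g`
is decreasing. Extended to a nondecreasing nonpositive sequence, Abel summation against the
nonnegative partial sums of `a - b` gives `∑ c i * (a i - b i) ≤ 0`, whence
`∑ g (a i) < ∑ g (b i)`; `a` and `b` differ somewhere because `x` is not a permutation of `y`.
-/

open Finset

theorem sum_range_mul_nonpos_of_monotoneOn {R : Type*} [CommRing R] [PartialOrder R]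
    [IsOrderedRing R] {n : ℕ} {c d : ℕ → R} (hc : MonotoneOn c (Set.Iio n))
    (hc₀ : ∀ i < n, c i ≤ 0) (hd : ∀ k ≤ n, 0 ≤ ∑ i ∈ range k, d i) :
    ∑ i ∈ range n, c i * d i ≤ 0 := by
  rcases n.eq_zero_or_pos with rfl | hn
  · simp
  have hlast : c (n - 1) • ∑ i ∈ range n, d i ≤ 0 :=
    mul_nonpos_of_nonpos_of_nonneg (hc₀ _ (by omega)) (hd n le_rfl)
  have hsteps : 0 ≤ ∑ i ∈ range (n - 1), (c (i + 1) - c i) • ∑ j ∈ range (i + 1), d j := by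
    refine sum_nonneg fun i hi => ?_
    rw [mem_range] at hi
    exact mul_nonneg (sub_nonneg.2 (hc (Set.mem_Iio.2 (by omega)) (Set.mem_Iio.2 (by omega))
      (by omega))) (hd _ (by omega))
  rw [show ∑ i ∈ range n, c i * d i = _ from sum_range_by_parts c d n]
  exact sub_nonpos.2 (hlast.trans hsteps)

theorem ConvexOn.slope_le_slope_of_le {𝕜 : Type*} [Field 𝕜] [LinearOrder 𝕜]
    [IsStrictOrderedRing 𝕜] {s : Set 𝕜} {f : 𝕜 → 𝕜} (hf : ConvexOn 𝕜 s f) {p q p' q' : 𝕜}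
    (hp : p ∈ s) (hq : q ∈ s) (hp' : p' ∈ s) (hq' : q' ∈ s) (hpq : p ≠ q) (hpq' : p' ≠ q')
    (hpp' : p ≤ p') (hqq' : q ≤ q') : slope f p q ≤ slope f p' q' := by
  by_cases h : p' = q
  · have hpq'' : p ≠ q' := fun h' => hpq (le_antisymm (hpp'.trans h.le) (hqq'.trans h'.ge))
    calc slope f p q ≤ slope f p q' := hf.slope_mono hp ⟨hq, hpq.symm⟩ ⟨hq', hpq''.symm⟩ hqq'
      _ = slope f q' p := slope_comm f _ _
      _ ≤ slope f q' p' := hf.slope_mono hq' ⟨hp, hpq''⟩ ⟨hp', hpq'⟩ hpp'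
      _ = slope f p' q' := slope_comm f _ _
  · calc slope f p q = slope f q p := slope_comm f _ _
      _ ≤ slope f q p' := hf.slope_mono hq ⟨hp, hpq⟩ ⟨hp', h⟩ hpp'
      _ = slope f p' q := slope_comm f _ _
      _ ≤ slope f p' q' := hf.slope_mono hp' ⟨hq, Ne.symm h⟩ ⟨hq', hpq'.symm⟩ hqq'

theorem StrictConvexOn.slope_mul_sub_lt {𝕜 : Type*} [Field 𝕜] [LinearOrder 𝕜]
    [IsStrictOrderedRing 𝕜] {s : Set 𝕜} {f : 𝕜 → 𝕜} (hf : StrictConvexOn 𝕜 s f)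
    {a b m : 𝕜} (ha : a ∈ s) (hb : b ∈ s) (hm : m ∈ Set.uIoo a b) :
    slope f a m * (b - a) < f b - f a := by
  have hms : m ∈ s := hf.1.ordConnected.uIcc_subset ha hb (Set.uIoo_subset_uIcc_self hm)
  rw [Set.uIoo_eq_union] at hm
  rcases hm with ⟨ham, hmb⟩ | ⟨hbm, hma⟩
  · have hslope : slope f a m < slope f a b := by
      simpa only [slope_def_field] using
        hf.secant_strict_mono ha hms hb ham.ne' (ham.trans hmb).ne' hmb
    calc slope f a m * (b - a) < slope f a b * (b - a) :=
          mul_lt_mul_of_pos_right hslope (sub_pos.2 (ham.trans hmb))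
      _ = f b - f a := by rw [mul_comm]; exact sub_smul_slope f a b
  · have hslope : slope f a b < slope f a m := by
      simpa only [slope_def_field] using
        hf.secant_strict_mono ha hb hms (hbm.trans hma).ne hma.ne hbm
    calc slope f a m * (b - a) < slope f a b * (b - a) :=
          mul_lt_mul_of_neg_right hslope (sub_neg.2 (hbm.trans hma))
      _ = f b - f a := by rw [mul_comm]; exact sub_smul_slope f a b

theorem add_div_two_mem_uIoo {𝕜 : Type*} [Field 𝕜] [LinearOrder 𝕜] [IsStrictOrderedRing 𝕜]
    {a b : 𝕜} (h : a ≠ b) : (a + b) / 2 ∈ Set.uIoo a b := by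
  rcases lt_or_gt_of_ne h with h | h
  · exact Set.mem_uIoo_of_lt (by linarith) (by linarith)
  · exact Set.mem_uIoo_of_gt (by linarith) (by linarith)

theorem exists_monotone_nonpos_slope_bound {s : Set ℝ} {g : ℝ → ℝ} (hdec : StrictAntiOn g s)
    (hconv : StrictConvexOn ℝ s g) {n : ℕ} {a b : ℕ → ℝ} (ha : ∀ i < n, a i ∈ s)
    (hb : ∀ i < n, b i ∈ s) (ha_mono : MonotoneOn a (Set.Iio n))
    (hb_mono : MonotoneOn b (Set.Iio n)) :
    ∃ e : ℕ → ℝ, Monotone e ∧ (∀ i, e i ≤ 0) ∧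
      ∀ i < n, a i ≠ b i → e i * (b i - a i) < g (b i) - g (a i) := by
  set J : Set ℕ := {i | i < n ∧ a i ≠ b i}
  set m : ℕ → ℝ := fun i => (a i + b i) / 2
  have hm : ∀ i, a i ≠ b i → m i ∈ Set.uIoo (a i) (b i) := fun _ => add_div_two_mem_uIoo
  have hm_mem : ∀ i ∈ J, m i ∈ s := fun i hi =>
    hconv.1.ordConnected.uIcc_subset (ha i hi.1) (hb i hi.1)
      (Set.uIoo_subset_uIcc_self (hm i hi.2))
  have ha_ne_m : ∀ i ∈ J, a i ≠ m i := fun i hi =>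
    (ne_of_mem_of_not_mem (hm i hi.2) Set.left_notMem_uIoo).symm
  set c : ℕ → ℝ := fun i => slope g (a i) (m i)
  have hc : MonotoneOn c J := fun i hi j hj hij => by
    have haij := ha_mono hi.1 hj.1 hij
    have hbij := hb_mono hi.1 hj.1 hij
    exact hconv.convexOn.slope_le_slope_of_le (ha i hi.1) (hm_mem i hi) (ha j hj.1) (hm_mem j hj)
      (ha_ne_m i hi) (ha_ne_m j hj) haij (by simp only [m]; linarith)
  have hJ : J.Finite := (Set.finite_Iio n).subset fun i hi => hi.1
  obtain ⟨e, he, hce⟩ := hc.exists_monotone_extension (hJ.image c).bddBelow (hJ.image c).bddAbove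
  refine ⟨fun i => min (e i) 0, fun i j hij => min_le_min_right 0 (he hij),
    fun i => min_le_right _ _, fun i hi hab => ?_⟩
  have hc_neg : c i < 0 := hdec.slope_neg (ha i hi) (hm_mem i ⟨hi, hab⟩) (ha_ne_m i ⟨hi, hab⟩)
  show min (e i) 0 * (b i - a i) < _
  rw [← hce ⟨hi, hab⟩, min_eq_left hc_neg.le]
  exact hconv.slope_mul_sub_lt (ha i hi) (hb i hi) (hm i hab)

noncomputable def sortedSeq {n : ℕ} (x : Fin n → ℝ) (i : ℕ) : ℝ :=
  if h : i < n then x (Tuple.sort x ⟨i, h⟩) else 0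

section sortedSeq

variable {n : ℕ} (x : Fin n → ℝ)

theorem sortedSeq_coe (i : Fin n) : sortedSeq x i = x (Tuple.sort x i) :=
  dif_pos i.isLt

theorem monotoneOn_sortedSeq : MonotoneOn (sortedSeq x) (Set.Iio n) := fun i hi j hj hij => by
  simp only [sortedSeq, dif_pos (Set.mem_Iio.1 hi), dif_pos (Set.mem_Iio.1 hj)]
  exact Tuple.monotone_sort x (Fin.mk_le_mk.2 hij)

theorem sortedSeq_mem {s : Set ℝ} (hx : ∀ i, x i ∈ s) : ∀ i < n, sortedSeq x i ∈ s :=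
  fun i hi => by simpa only [sortedSeq, dif_pos hi] using hx _

theorem sum_range_sortedSeq (f : ℝ → ℝ) : ∑ i ∈ range n, f (sortedSeq x i) = ∑ i, f (x i) := by
  rw [← Fin.sum_univ_eq_sum_range (fun i => f (sortedSeq x i)),
    ← Equiv.sum_comp (Tuple.sort x) (fun i => f (x i))]
  simp only [sortedSeq_coe]

theorem sumSmallest_eq_sum_range_sortedSeq {k : ℕ} (hk : k ≤ n) :
    sumSmallest x k = ∑ i ∈ range k, sortedSeq x i := by
  have hrange : (univ.filter fun i : Fin n => (i : ℕ) < k).map Fin.valEmbedding = range k := by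
    ext j
    simp only [mem_map, mem_filter, mem_univ, true_and, Fin.valEmbedding_apply, mem_range]
    exact ⟨fun ⟨i, hi, hij⟩ => hij ▸ hi, fun hj => ⟨⟨j, by omega⟩, hj, rfl⟩⟩
  rw [← hrange, sum_map, sumSmallest]
  simp only [Fin.valEmbedding_apply, sortedSeq_coe]

theorem exists_perm_eq_comp_of_sortedSeq_eq {x y : Fin n → ℝ}
    (h : ∀ i < n, sortedSeq x i = sortedSeq y i) : ∃ σ : Equiv.Perm (Fin n), x = y ∘ σ := by
  refine ⟨(Tuple.sort x).symm.trans (Tuple.sort y), funext fun j => ?_⟩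
  simpa [sortedSeq_coe] using h _ ((Tuple.sort x).symm j).isLt

end sortedSeq

theorem sum_range_comp_lt_of_sum_range_le {s : Set ℝ} {g : ℝ → ℝ} (hdec : StrictAntiOn g s)
    (hconv : StrictConvexOn ℝ s g) {n : ℕ} {a b : ℕ → ℝ} (ha : ∀ i < n, a i ∈ s)
    (hb : ∀ i < n, b i ∈ s) (ha_mono : MonotoneOn a (Set.Iio n))
    (hb_mono : MonotoneOn b (Set.Iio n))
    (hsum : ∀ k ≤ n, ∑ i ∈ range k, b i ≤ ∑ i ∈ range k, a i) (hne : ∃ i < n, a i ≠ b i) :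
    ∑ i ∈ range n, g (a i) < ∑ i ∈ range n, g (b i) := by
  obtain ⟨e, he, he₀, hslope⟩ :=
    exists_monotone_nonpos_slope_bound hdec hconv ha hb ha_mono hb_mono
  obtain ⟨i₀, hi₀, hne₀⟩ := hne
  have hlinear : ∑ i ∈ range n, e i * (b i - a i) < ∑ i ∈ range n, (g (b i) - g (a i)) := by
    refine sum_lt_sum (fun i hi => ?_) ⟨i₀, mem_range.2 hi₀, hslope i₀ hi₀ hne₀⟩
    rcases eq_or_ne (a i) (b i) with h | h
    · simp [h]
    · exact (hslope i (mem_range.1 hi) h).le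
  have habel : ∑ i ∈ range n, e i * (a i - b i) ≤ 0 :=
    sum_range_mul_nonpos_of_monotoneOn (he.monotoneOn _) (fun i _ => he₀ i) fun k hk => by
      rw [sum_sub_distrib]; exact sub_nonneg.2 (hsum k hk)
  simp only [mul_sub, sum_sub_distrib] at hlinear habel
  linarith

theorem stmt_3_general {n : ℕ} (I : Set ℝ) (g : ℝ → ℝ)
    (hdec : StrictAntiOn g I) (hconv : StrictConvexOn ℝ I g)
    (x y : Fin n → ℝ) (hx : ∀ i, x i ∈ I) (hy : ∀ i, y i ∈ I)
    (hmaj : WeaklySupermajorizedBy x y)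
    (hperm : ¬ ∃ σ : Equiv.Perm (Fin n), x = y ∘ σ) :
    ∑ i, g (x i) < ∑ i, g (y i) := by
  rw [← sum_range_sortedSeq x g, ← sum_range_sortedSeq y g]
  refine sum_range_comp_lt_of_sum_range_le hdec hconv (sortedSeq_mem x hx) (sortedSeq_mem y hy)
    (monotoneOn_sortedSeq x) (monotoneOn_sortedSeq y) (fun k hk => ?_) ?_
  · rcases k.eq_zero_or_pos with rfl | hk₀
    · simp
    · simpa only [sumSmallest_eq_sum_range_sortedSeq _ hk] using hmaj k hk₀ hk
  · by_contra! h
    exact hperm (exists_perm_eq_comp_of_sortedSeq_eq h)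

/-- Let `I ⊆ ℝ` be an interval and `g` strictly decreasing and strictly convex on `I`.
If `x, y ∈ Iⁿ`, `x` is weakly supermajorized by `y`, and `x` is not a permutation of `y`,
then `∑ i, g (x i) < ∑ i, g (y i)`. -/
theorem stmt_3 {n : ℕ} (I : Set ℝ) (hI : I.OrdConnected) (g : ℝ → ℝ)
    (hdec : StrictAntiOn g I) (hconv : StrictConvexOn ℝ I g)
    (x y : Fin n → ℝ) (hx : ∀ i, x i ∈ I) (hy : ∀ i, y i ∈ I)
    (hmaj : WeaklySupermajorizedBy x y)
    (hperm : ¬ ∃ σ : Equiv.Perm (Fin n), x = y ∘ σ) :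
    ∑ i, g (x i) < ∑ i, g (y i) :=
  stmt_3_general I g hdec hconv x y hx hy hmaj hperm
end

section
/- Let I ⊆ ℝ be an interval and g : I → ℝ be strictly increasing and strictly convex on I. Define φ(x) = Σ_{i=1}^n g(x_i). Then for all x, y ∈ I^n, if x is weakly submajorized by y and x is not a permutation of y, then φ(x) < φ(y). -/
/-- The sum of the `k` largest components of `x : Fin n → ℝ` (the last `k` entries of the
monotone rearrangement of `x`). -/
noncomputable def sumLargest {n : ℕ} (x : Fin n → ℝ) (k : ℕ) : ℝ :=
  ∑ i ∈ Finset.univ.filter (fun i : Fin n => n - k ≤ (i : ℕ)), x (Tuple.sort x i)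

/-- `x` is weakly submajorized by `y`: for each `k = 1,...,n` the sum of the `k` largest
components of `x` is at most that of `y`. -/
def WeaklySubmajorizedBy {n : ℕ} (x y : Fin n → ℝ) : Prop :=
  ∀ k : ℕ, 1 ≤ k → k ≤ n → sumLargest x k ≤ sumLargest y k

/-!
Sort `x` and `y` increasingly into `u` and `v`. Then `∑ g (v i) - ∑ g (u i) = ∑ cᵢ dᵢ`, where
`dᵢ = vᵢ - uᵢ` and `cᵢ` is the slope of `g` over `[uᵢ, vᵢ]`. Weak submajorization says that every
tail sum of `d` is nonnegative, and on the indices with `uᵢ ≠ vᵢ` the slopes are positive (`g`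
increasing) and nondecreasing (slopes of a convex function increase in both endpoints), so Abel
summation gives `∑ cᵢ dᵢ ≥ 0`. For strictness, let `k` start the last run of indices on which the
pair `(uᵢ, vᵢ)` is constant: strict convexity makes the slope jump at `k`, and the tail sum from
`k` is a positive multiple of `dₖ > 0`.
-/

open Finset

lemma Finset.filter_le_insert_of_forall_lt {ι : Type*} [LinearOrder ι] {s : Finset ι} {a : ι}
    (has : ∀ x ∈ s, a < x) : (insert a s).filter (a ≤ ·) = insert a s :=
  filter_true_of_mem fun i hi => (mem_insert.1 hi).elim ge_of_eq fun h => (has i h).le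

lemma Finset.filter_le_insert_of_lt {ι : Type*} [LinearOrder ι] {s : Finset ι} {a k : ι}
    (hak : a < k) : (insert a s).filter (k ≤ ·) = s.filter (k ≤ ·) := by
  classical
  rw [filter_insert, if_neg hak.not_ge]

lemma Finset.sum_insert_mul_eq_mul_sum_add {ι R : Type*} [DecidableEq ι] [CommRing R]
    {s : Finset ι} {a : ι} (ha : a ∉ s) (c d : ι → R) :
    ∑ i ∈ insert a s, c i * d i =
      c a * ∑ i ∈ insert a s, d i + ∑ i ∈ s, (c i - c a) * d i := by
  rw [sum_insert ha, sum_insert ha, mul_add, mul_sum, add_assoc, ← sum_add_distrib]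
  congr 1
  exact sum_congr rfl fun i _ => by ring

section Abel

variable {ι 𝕜 : Type*} [LinearOrder ι] [Field 𝕜] [LinearOrder 𝕜] [IsStrictOrderedRing 𝕜]
  {s : Finset ι} {c d : ι → 𝕜}

lemma sum_mul_nonneg_of_monotoneOn (hc : MonotoneOn c s) (hc₀ : ∀ i ∈ s, 0 ≤ c i)
    (hd : ∀ k ∈ s, 0 ≤ ∑ i ∈ s with k ≤ i, d i) :
    0 ≤ ∑ i ∈ s, c i * d i := by
  classical
  induction s using Finset.induction_on_min generalizing c with
  | empty => simp
  | insert a s has ih =>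
    have ha : a ∈ insert a s := mem_insert_self a s
    have hsum := hd a ha
    rw [filter_le_insert_of_forall_lt has] at hsum
    have hc' : MonotoneOn (fun i => c i - c a) s := fun i hi j hj hij =>
      sub_le_sub_right (hc (mem_insert_of_mem hi) (mem_insert_of_mem hj) hij) _
    have hc₀' : ∀ i ∈ s, 0 ≤ c i - c a := fun i hi =>
      sub_nonneg.2 (hc ha (mem_insert_of_mem hi) (has i hi).le)
    have hd' : ∀ k ∈ s, 0 ≤ ∑ i ∈ s with k ≤ i, d i := fun k hk =>
      filter_le_insert_of_lt (has k hk) ▸ hd k (mem_insert_of_mem hk)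
    rw [sum_insert_mul_eq_mul_sum_add fun h => (has a h).false]
    exact add_nonneg (mul_nonneg (hc₀ a ha) hsum) (ih hc' hc₀' hd')

lemma sum_mul_pos_of_monotoneOn (hc : MonotoneOn c s) (hc₀ : ∀ i ∈ s, 0 ≤ c i)
    (hd : ∀ k ∈ s, 0 ≤ ∑ i ∈ s with k ≤ i, d i) {k : ι} (hk : k ∈ s) (hck : 0 < c k)
    (hlt : ∀ i ∈ s, i < k → c i < c k) (hdk : 0 < ∑ i ∈ s with k ≤ i, d i) :
    0 < ∑ i ∈ s, c i * d i := by
  classical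
  induction s using Finset.induction_on_min generalizing c with
  | empty => simp at hk
  | insert a s has ih =>
    have ha : a ∈ insert a s := mem_insert_self a s
    have hc' : MonotoneOn (fun i => c i - c a) s := fun i hi j hj hij =>
      sub_le_sub_right (hc (mem_insert_of_mem hi) (mem_insert_of_mem hj) hij) _
    have hc₀' : ∀ i ∈ s, 0 ≤ c i - c a := fun i hi =>
      sub_nonneg.2 (hc ha (mem_insert_of_mem hi) (has i hi).le)
    have hd' : ∀ j ∈ s, 0 ≤ ∑ i ∈ s with j ≤ i, d i := fun j hj =>
      filter_le_insert_of_lt (has j hj) ▸ hd j (mem_insert_of_mem hj)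
    rw [sum_insert_mul_eq_mul_sum_add fun h => (has a h).false]
    rcases mem_insert.1 hk with rfl | hks
    · rw [filter_le_insert_of_forall_lt has] at hdk
      exact add_pos_of_pos_of_nonneg (mul_pos hck hdk)
        (sum_mul_nonneg_of_monotoneOn hc' hc₀' hd')
    · have hsum := hd a ha
      rw [filter_le_insert_of_forall_lt has] at hsum
      have hak := has k hks
      refine add_pos_of_nonneg_of_pos (mul_nonneg (hc₀ a ha) hsum)
        (ih hc' hc₀' hd' hks (sub_pos.2 (hlt a ha hak)) ?_ ?_)
      · exact fun i hi hik => sub_lt_sub_right (hlt i (mem_insert_of_mem hi) hik) _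
      · rwa [← filter_le_insert_of_lt hak]

end Abel

section Slope

variable {𝕜 : Type*} [Field 𝕜] [LinearOrder 𝕜] [IsStrictOrderedRing 𝕜] {s : Set 𝕜} {f : 𝕜 → 𝕜}

lemma StrictConvexOn.strictMonoOn_slope (hf : StrictConvexOn 𝕜 s f) {x : 𝕜} (hx : x ∈ s) :
    StrictMonoOn (slope f x) (s \ {x}) := by
  rw [slope_fun_def_field]
  exact fun _ hy _ hz hyz => hf.secant_strict_mono hx hy.1 hz.1 hy.2 hz.2 hyz

lemma StrictConvexOn.strictMonoOn_uncurry_slope (hf : StrictConvexOn 𝕜 s f) :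
    StrictMonoOn (Function.uncurry (slope f)) (s ×ˢ s \ Set.diagonal 𝕜) := by
  rintro ⟨a, b⟩ ⟨⟨ha, hb⟩, hab : a ≠ b⟩ ⟨a', b'⟩ ⟨⟨ha', hb'⟩, hab' : a' ≠ b'⟩ hlt
  obtain ⟨haa', hbb'⟩ := Prod.mk_le_mk.1 hlt.le
  simp only [Function.uncurry_apply_pair]
  rcases eq_or_ne a b' with rfl | hab''
  · -- the secant over `[a, b']` degenerates, so pass through the one over `[b, a']`
    have hba : b < a := lt_of_le_of_ne hbb' hab.symm
    calc slope f a b = slope f b a := slope_comm f a b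
      _ ≤ slope f b a' := (hf.strictMonoOn_slope hb).monotoneOn ⟨ha, hab⟩
          ⟨ha', (hba.trans_le haa').ne'⟩ haa'
      _ = slope f a' b := slope_comm f b a'
      _ < slope f a' a :=
          hf.strictMonoOn_slope ha' ⟨hb, (hba.trans_le haa').ne⟩ ⟨ha, hab'.symm⟩ hba
  · have h₁ := hf.strictMonoOn_slope ha
    have h₂ := hf.strictMonoOn_slope hb'
    have hb₁ : b ∈ s \ {a} := ⟨hb, hab.symm⟩
    have hb'₁ : b' ∈ s \ {a} := ⟨hb', hab''.symm⟩
    have ha₂ : a ∈ s \ {b'} := ⟨ha, hab''⟩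
    have ha'₂ : a' ∈ s \ {b'} := ⟨ha', hab'⟩
    rw [slope_comm f a' b']
    rcases Prod.lt_iff.1 hlt with ⟨h, -⟩ | ⟨-, h⟩
    · calc slope f a b ≤ slope f a b' := h₁.monotoneOn hb₁ hb'₁ hbb'
        _ = slope f b' a := slope_comm f a b'
        _ < slope f b' a' := h₂ ha₂ ha'₂ h
    · calc slope f a b < slope f a b' := h₁ hb₁ hb'₁ h
        _ = slope f b' a := slope_comm f a b'
        _ ≤ slope f b' a' := h₂.monotoneOn ha₂ ha'₂ haa'

end Slope

lemma MonotoneOn.exists_mem_lt_before_eq_after {ι α : Type*} [LinearOrder ι] [PartialOrder α]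
    {S : Finset ι} (hS : S.Nonempty) {P : ι → α} (hP : MonotoneOn P S) :
    ∃ k ∈ S, (∀ i ∈ S, i < k → P i < P k) ∧ ∀ i ∈ S, k ≤ i → P i = P k := by
  classical
  set j := S.max' hS
  have hj : j ∈ S := S.max'_mem hS
  have hT : (S.filter (P · = P j)).Nonempty := ⟨j, mem_filter.2 ⟨hj, rfl⟩⟩
  obtain ⟨hkS, hkj⟩ := mem_filter.1 ((S.filter (P · = P j)).min'_mem hT)
  refine ⟨_, hkS, fun i hi hik => ?_, fun i hi hki => ?_⟩
  · refine lt_of_le_of_ne (hP hi hkS hik.le) fun h => hik.not_ge ?_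
    exact min'_le _ _ (mem_filter.2 ⟨hi, h.trans hkj⟩)
  · refine le_antisymm ?_ (hP hkS hi hki)
    exact (hP hi hj (S.le_max' i hi)).trans_eq hkj.symm

lemma sum_sub_sum_eq_sum_slope_mul {ι 𝕜 : Type*} [Fintype ι] [Field 𝕜] [DecidableEq 𝕜]
    (g : 𝕜 → 𝕜) (u v : ι → 𝕜) :
    ∑ i, g (v i) - ∑ i, g (u i) = ∑ i with u i ≠ v i, slope g (u i) (v i) * (v i - u i) := by
  have hgd : ∀ i, g (v i) - g (u i) = slope g (u i) (v i) * (v i - u i) := fun i => by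
    rw [mul_comm, ← smul_eq_mul, sub_smul_slope, vsub_eq_sub]
  rw [← sum_sub_distrib, sum_congr rfl fun i _ => hgd i]
  exact (sum_filter_of_ne fun i _ h => (sub_ne_zero.1 (right_ne_zero_of_mul h)).symm).symm

theorem sum_lt_sum_of_monotone_of_forall_sum_filter_le {ι 𝕜 : Type*} [LinearOrder ι] [Fintype ι]
    [Field 𝕜] [LinearOrder 𝕜] [IsStrictOrderedRing 𝕜] {I : Set 𝕜} {g : 𝕜 → 𝕜}
    (hinc : StrictMonoOn g I) (hconv : StrictConvexOn 𝕜 I g) {u v : ι → 𝕜}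
    (hu : Monotone u) (hv : Monotone v) (huI : ∀ i, u i ∈ I) (hvI : ∀ i, v i ∈ I)
    (htail : ∀ k, ∑ i with k ≤ i, u i ≤ ∑ i with k ≤ i, v i) (hne : u ≠ v) :
    ∑ i, g (u i) < ∑ i, g (v i) := by
  set S : Finset ι := {i | u i ≠ v i}
  set P : ι → 𝕜 × 𝕜 := fun i => (u i, v i)
  set c : ι → 𝕜 := fun i => slope g (u i) (v i)
  set d : ι → 𝕜 := fun i => v i - u i
  have hPS : Set.MapsTo P S (I ×ˢ I \ Set.diagonal 𝕜) := fun i hi =>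
    ⟨⟨huI i, hvI i⟩, (mem_filter.1 hi).2⟩
  have hc : MonotoneOn c S :=
    hconv.strictMonoOn_uncurry_slope.monotoneOn.comp ((hu.prodMk hv).monotoneOn _) hPS
  have hc₀ : ∀ i ∈ S, 0 < c i := fun i hi => hinc.slope_pos (huI i) (hvI i) (mem_filter.1 hi).2
  have htailS : ∀ j, 0 ≤ ∑ i ∈ S with j ≤ i, d i := fun j => by
    rw [filter_comm, sum_filter_of_ne (p := fun i => u i ≠ v i) fun i _ hi h =>
      hi (sub_eq_zero.2 h.symm), sum_sub_distrib]
    exact sub_nonneg.2 (htail j)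
  have hS : S.Nonempty := by
    obtain ⟨i, hi⟩ := Function.ne_iff.1 hne
    exact ⟨i, mem_filter.2 ⟨mem_univ i, hi⟩⟩
  obtain ⟨k, hkS, hlt, heq⟩ := ((hu.prodMk hv).monotoneOn S).exists_mem_lt_before_eq_after hS
  have hdk : 0 < ∑ i ∈ S with k ≤ i, d i := by
    have hconst : ∀ i ∈ {i ∈ S | k ≤ i}, d i = d k := fun i hi => by
      obtain ⟨hiS, hki⟩ := mem_filter.1 hi
      obtain ⟨hui, hvi⟩ : u i = u k ∧ v i = v k := Prod.ext_iff.1 (heq i hiS hki)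
      simp only [d, hui, hvi]
    have hcard : 0 < (#{i ∈ S | k ≤ i} : 𝕜) := by
      exact_mod_cast card_pos.2 ⟨k, mem_filter.2 ⟨hkS, le_rfl⟩⟩
    have hdk₀ : d k ≠ 0 := sub_ne_zero.2 (mem_filter.1 hkS).2.symm
    have := htailS k
    rw [sum_congr rfl hconst, sum_const, nsmul_eq_mul] at this ⊢
    exact mul_pos hcard ((nonneg_of_mul_nonneg_right this hcard).lt_of_ne hdk₀.symm)
  rw [← sub_pos, sum_sub_sum_eq_sum_slope_mul]
  exact sum_mul_pos_of_monotoneOn hc (fun i hi => (hc₀ i hi).le) (fun j _ => htailS j) hkS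
    (hc₀ k hkS) (fun i hi hik => hconv.strictMonoOn_uncurry_slope (hPS hi) (hPS hkS)
      (hlt i hi hik)) hdk

lemma sumLargest_sub_val {n : ℕ} (x : Fin n → ℝ) (k : Fin n) :
    sumLargest x (n - k) = ∑ i with k ≤ i, x (Tuple.sort x i) := by
  rw [sumLargest, Nat.sub_sub_self k.is_lt.le]
  rfl

theorem stmt_4_general {n : ℕ} (I : Set ℝ) (g : ℝ → ℝ)
    (hinc : StrictMonoOn g I) (hconv : StrictConvexOn ℝ I g)
    (x y : Fin n → ℝ) (hx : ∀ i, x i ∈ I) (hy : ∀ i, y i ∈ I)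
    (hmaj : WeaklySubmajorizedBy x y)
    (hperm : ¬ ∃ σ : Equiv.Perm (Fin n), x = y ∘ σ) :
    ∑ i, g (x i) < ∑ i, g (y i) := by
  rw [← Equiv.sum_comp (Tuple.sort x) (fun i => g (x i)),
    ← Equiv.sum_comp (Tuple.sort y) (fun i => g (y i))]
  refine sum_lt_sum_of_monotone_of_forall_sum_filter_le hinc hconv (Tuple.monotone_sort x)
    (Tuple.monotone_sort y) (fun _ => hx _) (fun _ => hy _) (fun k => ?_) fun h => ?_
  · rw [← sumLargest_sub_val, ← sumLargest_sub_val]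
    exact hmaj _ (by omega) (by omega)
  · refine hperm ⟨(Tuple.sort x).symm.trans (Tuple.sort y), funext fun i => ?_⟩
    simpa using congrFun h ((Tuple.sort x).symm i)

/-- Let `I ⊆ ℝ` be an interval and `g` strictly increasing and strictly convex on `I`.
If `x, y ∈ Iⁿ`, `x` is weakly submajorized by `y`, and `x` is not a permutation of `y`,
then `∑ i, g (x i) < ∑ i, g (y i)`. -/
theorem stmt_4 {n : ℕ} (I : Set ℝ) (hI : I.OrdConnected) (g : ℝ → ℝ)
    (hinc : StrictMonoOn g I) (hconv : StrictConvexOn ℝ I g)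
    (x y : Fin n → ℝ) (hx : ∀ i, x i ∈ I) (hy : ∀ i, y i ∈ I)
    (hmaj : WeaklySubmajorizedBy x y)
    (hperm : ¬ ∃ σ : Equiv.Perm (Fin n), x = y ∘ σ) :
    ∑ i, g (x i) < ∑ i, g (y i) :=
  stmt_4_general I g hinc hconv x y hx hy hmaj hperm
end

section
/- For positive integers m ≤ n and any integer r with 0 ≤ r ≤ m−1, the complement of the set J^r_{n,m} in ℤ/nℤ equals J^{n−r−1}_{n,n−m}. -/
/-!
Writing `n * i + r = k * m + s` with `0 ≤ s < m` shows that `k ∈ J^r_{n,m}` exactly when the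
residue of `r - k m` modulo `n` is less than `m`. For `J^{n-r-1}_{n,n-m}` the corresponding
residue is that of `-1 - (r - k m)`, namely `n - 1` minus the first one, and it is less than
`n - m` exactly when the first one is at least `m`.
-/

/-- The Clough–Douthett set `J^r_{n,m} = { ⌊(ni+r)/m⌋ : 0 ≤ i < m } ⊆ ℤ/nℤ`. -/
def Jset (n m r : ℕ) : Finset (ZMod n) :=
  (Finset.range m).image (fun i => (((n * i + r) / m : ℕ) : ZMod n))

namespace Jset

variable {n m r : ℕ}

lemma val_sub_mul_lt_of_mem (hmn : m ≤ n) {k : ZMod n} (hk : k ∈ Jset n m r) :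
    ((r : ZMod n) - k * m).val < m := by
  obtain ⟨i, hi, rfl⟩ := Finset.mem_image.mp hk
  have hm : 0 < m := (Nat.zero_le i).trans_lt (Finset.mem_range.mp hi)
  have hdiv := congrArg (Nat.cast : ℕ → ZMod n) (Nat.div_add_mod' (n * i + r) m)
  push_cast at hdiv
  have hrem : (r : ZMod n) - (((n * i + r) / m : ℕ) : ZMod n) * m = ((n * i + r) % m : ℕ) := by
    rw [ZMod.natCast_self] at hdiv
    linear_combination -hdiv
  rw [hrem, ZMod.val_cast_of_lt ((Nat.mod_lt _ hm).trans_le hmn)]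
  exact Nat.mod_lt _ hm

lemma mem_of_val_sub_mul_lt [NeZero n] (hr : r < n) {k : ZMod n}
    (hk : ((r : ZMod n) - k * m).val < m) : k ∈ Jset n m r := by
  set s := ((r : ZMod n) - k * m).val
  have hcast : ((k.val * m + s : ℕ) : ZMod n) = r := by
    push_cast [s, ZMod.natCast_zmod_val]
    ring
  have hmod : k.val * m + s ≡ r [MOD n] := (ZMod.natCast_eq_natCast_iff _ _ _).mp hcast
  have hle : r ≤ k.val * m + s := by
    have := Nat.mod_le (k.val * m + s) n
    rw [hmod, Nat.mod_eq_of_lt hr] at this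
    exact this
  obtain ⟨i, hi⟩ := (Nat.modEq_iff_dvd' hle).mp hmod.symm
  have hni : n * i + r = m * k.val + s := by rw [← hi, Nat.mul_comm m]; omega
  have him : i < m := by
    have hK := ZMod.val_lt k
    have : n * i < n * m := by nlinarith
    exact Nat.lt_of_mul_lt_mul_left this
  refine Finset.mem_image.mpr ⟨i, Finset.mem_range.mpr him, ?_⟩
  rw [hni, Nat.mul_add_div (by omega), Nat.div_eq_of_lt hk, add_zero, ZMod.natCast_zmod_val]

lemma mem_iff_val_sub_mul_lt [NeZero n] (hmn : m ≤ n) (hr : r < n) {k : ZMod n} :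
    k ∈ Jset n m r ↔ ((r : ZMod n) - k * m).val < m :=
  ⟨val_sub_mul_lt_of_mem hmn, mem_of_val_sub_mul_lt hr⟩

end Jset

lemma ZMod.val_neg_one_sub {n : ℕ} [NeZero n] (x : ZMod n) : (-1 - x).val = n - 1 - x.val := by
  have hx := ZMod.val_lt x
  have : -1 - x = ((n - 1 - x.val : ℕ) : ZMod n) := by
    rw [Nat.cast_sub (by omega), Nat.cast_sub (by omega), ZMod.natCast_self, ZMod.natCast_zmod_val]
    ring
  rw [this, ZMod.val_cast_of_lt (by omega)]

theorem stmt_5_general (n m r : ℕ) [NeZero n] (hmn : m ≤ n) (hr : r ≤ m - 1) :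
    (Jset n m r)ᶜ = Jset n (n - m) (n - r - 1) := by
  have hn := NeZero.one_le (n := n)
  ext k
  have hdual : ((n - r - 1 : ℕ) : ZMod n) - k * (n - m : ℕ) = -1 - ((r : ZMod n) - k * m) := by
    rw [Nat.cast_sub (by omega), Nat.cast_sub (by omega), Nat.cast_sub hmn, ZMod.natCast_self]
    ring
  rw [Finset.mem_compl, Jset.mem_iff_val_sub_mul_lt hmn (by omega),
    Jset.mem_iff_val_sub_mul_lt (Nat.sub_le n m) (by omega), hdual, ZMod.val_neg_one_sub]
  have := ZMod.val_lt ((r : ZMod n) - k * (m : ZMod n))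
  omega

/-- For `1 ≤ m ≤ n` and `0 ≤ r ≤ m − 1`, the complement of `J^r_{n,m}` in `ℤ/nℤ`
is `J^{n−r−1}_{n,n−m}`. -/
theorem stmt_5 (n m r : ℕ) [NeZero n] (hm : 1 ≤ m) (hmn : m ≤ n) (hr : r ≤ m - 1) :
    (Jset n m r)ᶜ = Jset n (n - m) (n - r - 1) :=
  stmt_5_general n m r hmn hr
end

section
/- Let G be a finite simple connected distance degree regular graph with diameter D, and let g : {1,...,D} → ℝ be any function. Then for every nonempty A ⊆ V(G), E_g(A) − E_g(V(G)∖A) = (2|A|/|V(G)| − 1) · E_g(V(G)). -/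
/-!
In a distance degree regular graph every vertex sees the same multiset of distances, so the row
sums `∑ w, g (d u w)` of the symmetric kernel `g ∘ d` all equal one constant `s`. Summing the rows
over `A` and over `Aᶜ`, the two cross terms between `A` and `Aᶜ` agree, hence the double sums of
the kernel over `A × A` and `Aᶜ × Aᶜ` differ by `(|A| - |Aᶜ|) s`, while the one over `V × V` is
`|V| s`. Removing the diagonal terms `g 0` turns these double sums into energies.
-/

/-- The `g`-energy of a set of vertices: the sum of `g` of the pairwise distances over all
unordered pairs of distinct vertices of `A`. -/
noncomputable def energy {V : Type*} [Fintype V] [DecidableEq V] (G : SimpleGraph V)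
    (g : ℕ → ℝ) (A : Finset V) : ℝ :=
  (∑ p ∈ A.offDiag, g (G.dist p.1 p.2)) / 2

open Finset

theorem Finset.sum_comp_eq_of_card_fiber_eq {α β M : Type*} [Fintype α] [DecidableEq β]
    [AddCommMonoid M] (f₁ f₂ : α → β) (h : ∀ b, #{a | f₁ a = b} = #{a | f₂ a = b})
    (g : β → M) : ∑ a, g (f₁ a) = ∑ a, g (f₂ a) := by
  have hmap : univ.val.map f₁ = univ.val.map f₂ := by
    ext b
    rw [Multiset.count_map, Multiset.count_map]
    simp_rw [eq_comm (a := b)]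
    exact h b
  simpa [Multiset.map_map] using congrArg (fun m => (m.map g).sum) hmap

theorem Finset.sum_offDiag_add_sum_diag {α M : Type*} [DecidableEq α] [AddCommMonoid M]
    (s : Finset α) (f : α → α → M) :
    ∑ p ∈ s.offDiag, f p.1 p.2 + ∑ a ∈ s, f a a = ∑ a ∈ s, ∑ b ∈ s, f a b := by
  rw [← sum_product' s s, ← diag_union_offDiag, sum_union (disjoint_diag_offDiag s), add_comm,
    sum_diag]

theorem Finset.sum_sum_sub_sum_sum_compl_of_rowSum_eq {α M : Type*} [Fintype α] [DecidableEq α]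
    [AddCommGroup M] (K : α → α → M) (hsymm : ∀ a b, K a b = K b a) (c : M)
    (hrow : ∀ a, ∑ b, K a b = c) (A : Finset α) :
    ∑ a ∈ A, ∑ b ∈ A, K a b - ∑ a ∈ Aᶜ, ∑ b ∈ Aᶜ, K a b = #A • c - #Aᶜ • c := by
  have hsplit (B : Finset α) : ∑ a ∈ B, (∑ b ∈ A, K a b + ∑ b ∈ Aᶜ, K a b) = #B • c := by
    simp [sum_add_sum_compl, hrow]
  have hcross : ∑ a ∈ A, ∑ b ∈ Aᶜ, K a b = ∑ a ∈ Aᶜ, ∑ b ∈ A, K a b := by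
    rw [sum_comm]
    simp only [hsymm]
  rw [← hsplit A, ← hsplit Aᶜ, sum_add_distrib, sum_add_distrib, hcross]
  abel

namespace SimpleGraph

variable {V : Type*} [Fintype V] (G : SimpleGraph V)

theorem sum_dist_eq_of_card_sphere_eq
    (hddr : ∀ (i : ℕ) (u v : V),
      (Finset.univ.filter (fun w => G.dist u w = i)).card =
        (Finset.univ.filter (fun w => G.dist v w = i)).card)
    (g : ℕ → ℝ) (u v : V) : ∑ w, g (G.dist u w) = ∑ w, g (G.dist v w) :=
  sum_comp_eq_of_card_fiber_eq _ _ (fun i => hddr i u v) g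

theorem two_mul_energy [DecidableEq V] (g : ℕ → ℝ) (B : Finset V) :
    2 * energy G g B = ∑ a ∈ B, ∑ b ∈ B, g (G.dist a b) - #B * g 0 := by
  rw [energy, mul_div_cancel₀ _ two_ne_zero, ← sum_offDiag_add_sum_diag]
  simp

end SimpleGraph

theorem stmt_9_general {V : Type*} [Fintype V] [DecidableEq V] (G : SimpleGraph V)
    (hddr : ∀ (i : ℕ) (u v : V),
      (Finset.univ.filter (fun w => G.dist u w = i)).card =
        (Finset.univ.filter (fun w => G.dist v w = i)).card)
    (g : ℕ → ℝ) (A : Finset V) :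
    energy G g A - energy G g Aᶜ =
      (2 * (A.card : ℝ) / (Fintype.card V : ℝ) - 1) * energy G g Finset.univ := by
  rcases isEmpty_or_nonempty V with _ | ⟨⟨v⟩⟩
  · simp [energy, eq_empty_of_isEmpty A, univ_eq_empty]
  set s := ∑ w, g (G.dist v w)
  have hrow (u : V) : ∑ w, g (G.dist u w) = s := G.sum_dist_eq_of_card_sphere_eq hddr g u v
  have hdiff := sum_sum_sub_sum_sum_compl_of_rowSum_eq (fun a b => g (G.dist a b))
    (fun a b => by rw [SimpleGraph.dist_comm]) s hrow A
  have htotal : ∑ a : V, ∑ b : V, g (G.dist a b) = Fintype.card V * s := by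
    simp [hrow]
  have hcompl : (#Aᶜ : ℝ) = Fintype.card V - #A := by
    rw [card_compl, Nat.cast_sub (card_le_univ A)]
  have hcard : (Fintype.card V : ℝ) ≠ 0 := (Nat.cast_pos.2 (Fintype.card_pos_iff.2 ⟨v⟩)).ne'
  have hA := G.two_mul_energy g A
  have hAc := G.two_mul_energy g Aᶜ
  have huniv := G.two_mul_energy g univ
  simp only [nsmul_eq_mul, hcompl] at hdiff hAc
  rw [htotal, card_univ] at huniv
  field_simp
  linear_combination (Fintype.card V / 2 : ℝ) * (hA - hAc + hdiff) -
    ((2 * #A - Fintype.card V) / 2 : ℝ) * huniv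

/-- For a finite connected distance degree regular graph `G` and any `g`, and any nonempty
`A ⊆ V(G)`: `E_g(A) − E_g(V∖A) = (2|A|/|V| − 1)·E_g(V)`. -/
theorem stmt_9 {V : Type*} [Fintype V] [DecidableEq V] (G : SimpleGraph V)
    (hconn : G.Connected)
    (hddr : ∀ (i : ℕ) (u v : V),
      (Finset.univ.filter (fun w => G.dist u w = i)).card =
        (Finset.univ.filter (fun w => G.dist v w = i)).card)
    (g : ℕ → ℝ) (A : Finset V) (hA : A.Nonempty) :
    energy G g A - energy G g Aᶜ =
      (2 * (A.card : ℝ) / (Fintype.card V : ℝ) - 1) * energy G g Finset.univ :=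
  stmt_9_general G hddr g A
end

section
/- Let G be a finite simple connected distance degree regular graph with diameter D, and g : {1,...,D} → ℝ. If A ⊆ V(G) is a minimizer of E_g (i.e., E_g(A) ≤ E_g(B) for all B ⊆ V(G) with |B| = |A|), then V(G)∖A is a minimizer of E_g among subsets of size |V(G)| − |A|. -/
namespace Finset

section Fibers

variable {ι α β M : Type*} [Fintype α] [DecidableEq β] [AddCommMonoid M]

theorem sum_comp_eq_of_card_fiber_eq_s10 (φ : ι → α → β) (h : β → M)
    (hφ : ∀ i u v, #{w | φ u w = i} = #{w | φ v w = i}) (u v : ι) :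
    ∑ w, h (φ u w) = ∑ w, h (φ v w) := by
  have himage : univ.image (φ u) = univ.image (φ v) := by
    have hmem : ∀ x i, i ∈ univ.image (φ x) ↔ 0 < #{w | φ x w = i} := by
      simp [card_pos, filter_nonempty_iff]
    ext i
    rw [hmem, hmem, hφ i u v]
  rw [sum_comp, sum_comp, himage]
  exact sum_congr rfl fun i _ => by rw [hφ i u v]

theorem exists_forall_sum_comp_eq_of_card_fiber_eq (φ : ι → α → β) (h : β → M)
    (hφ : ∀ i u v, #{w | φ u w = i} = #{w | φ v w = i}) :
    ∃ T, ∀ u, ∑ w, h (φ u w) = T := by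
  rcases isEmpty_or_nonempty ι with _ | ⟨⟨u₀⟩⟩
  · exact ⟨0, isEmptyElim⟩
  · exact ⟨_, fun u => sum_comp_eq_of_card_fiber_eq_s10 φ h hφ u u₀⟩

end Fibers

variable {α M : Type*} [Fintype α] [DecidableEq α] [AddCommGroup M] {f : α → α → M} {T : M}

theorem sum_sum_compl_eq_card_smul_sub (hT : ∀ u, ∑ v, f u v = T) (s S : Finset α) :
    ∑ u ∈ s, ∑ v ∈ Sᶜ, f u v = #s • T - ∑ u ∈ s, ∑ v ∈ S, f u v := by
  have hrow : ∀ u, ∑ v ∈ Sᶜ, f u v = T - ∑ v ∈ S, f u v := fun u => by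
    rw [← hT u, ← sum_add_sum_compl S]
    abel
  rw [sum_congr rfl fun u _ => hrow u, sum_sub_distrib, sum_const]

theorem sum_sum_compl_compl (hf : ∀ u v, f u v = f v u) (hT : ∀ u, ∑ v, f u v = T)
    (S : Finset α) :
    ∑ u ∈ Sᶜ, ∑ v ∈ Sᶜ, f u v = #Sᶜ • T - #S • T + ∑ u ∈ S, ∑ v ∈ S, f u v := by
  have hcross : ∑ u ∈ Sᶜ, ∑ v ∈ S, f u v = #S • T - ∑ u ∈ S, ∑ v ∈ S, f u v :=
    calc ∑ u ∈ Sᶜ, ∑ v ∈ S, f u v = ∑ v ∈ S, ∑ u ∈ Sᶜ, f v u :=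
          sum_comm.trans <| sum_congr rfl fun v _ =>
            sum_congr rfl fun u _ => hf u v
      _ = #S • T - ∑ u ∈ S, ∑ v ∈ S, f u v := sum_sum_compl_eq_card_smul_sub hT S S
  rw [sum_sum_compl_eq_card_smul_sub hT, hcross]
  abel

end Finset

open Finset

section Energy

variable {V : Type*} [Fintype V] [DecidableEq V]

theorem energy_eq_sum_sum (G : SimpleGraph V) (g : ℕ → ℝ) (S : Finset V) :
    energy G g S = (∑ u ∈ S, ∑ v ∈ S, g (G.dist u v) - #S * g 0) / 2 := by
  rw [energy, ← sum_product' (f := fun u v => g (G.dist u v)), ← diag_union_offDiag,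
    sum_union (disjoint_diag_offDiag S), sum_diag]
  simp

theorem energy_compl {G : SimpleGraph V} {g : ℕ → ℝ} {T : ℝ}
    (hT : ∀ u, ∑ v, g (G.dist u v) = T) (S : Finset V) :
    energy G g Sᶜ = energy G g S + ((#Sᶜ : ℝ) - #S) * (T - g 0) / 2 := by
  rw [energy_eq_sum_sum, energy_eq_sum_sum,
    sum_sum_compl_compl (fun u v => by rw [G.dist_comm]) hT, nsmul_eq_mul, nsmul_eq_mul]
  ring

end Energy

theorem stmt_10_general {V : Type*} [Fintype V] [DecidableEq V] (G : SimpleGraph V)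
    (hddr : ∀ (i : ℕ) (u v : V),
      (Finset.univ.filter (fun w => G.dist u w = i)).card =
        (Finset.univ.filter (fun w => G.dist v w = i)).card)
    (g : ℕ → ℝ) (A : Finset V)
    (hmin : ∀ B : Finset V, B.card = A.card → energy G g A ≤ energy G g B) :
    ∀ B : Finset V, B.card = Aᶜ.card → energy G g Aᶜ ≤ energy G g B := by
  intro B hB
  obtain ⟨T, hT⟩ := exists_forall_sum_comp_eq_of_card_fiber_eq G.dist g hddr
  have hBc : #Bᶜ = #A := by
    rw [card_compl, hB, card_compl, Nat.sub_sub_self (card_le_univ A)]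
  calc energy G g Aᶜ = energy G g A + ((#Aᶜ : ℝ) - #A) * (T - g 0) / 2 := energy_compl hT A
    _ ≤ energy G g Bᶜ + ((#Bᶜᶜ : ℝ) - #Bᶜ) * (T - g 0) / 2 := by
      rw [compl_compl, hBc, hB]
      gcongr
      exact hmin _ hBc
    _ = energy G g B := by rw [← energy_compl hT, compl_compl]

/-- In a finite connected distance degree regular graph, the complement of a minimizer of
`E_g` is a minimizer of `E_g` (among subsets of cardinality `|V| − |A|`). -/
theorem stmt_10 {V : Type*} [Fintype V] [DecidableEq V] (G : SimpleGraph V)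
    (hconn : G.Connected)
    (hddr : ∀ (i : ℕ) (u v : V),
      (Finset.univ.filter (fun w => G.dist u w = i)).card =
        (Finset.univ.filter (fun w => G.dist v w = i)).card)
    (g : ℕ → ℝ) (A : Finset V)
    (hmin : ∀ B : Finset V, B.card = A.card → energy G g A ≤ energy G g B) :
    ∀ B : Finset V, B.card = Aᶜ.card → energy G g Aᶜ ≤ energy G g B :=
  stmt_10_general G hddr g A hmin
end

section
/- Let G be a finite simple connected graph with diameter D and suppose there is a function g : {1,...,D} → ℝ such that {g(1),...,g(D)} is linearly independent over ℚ and the complement of every minimizer of E_g is again a minimizer of E_g. Then G is distance degree regular. -/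
open Finset

def IsEnergyMinimizer {V : Type*} [Fintype V] [DecidableEq V] (G : SimpleGraph V) (g : ℕ → ℝ)
    (A : Finset V) : Prop :=
  ∀ B : Finset V, B.card = A.card → energy G g A ≤ energy G g B

namespace SimpleGraph

variable {V : Type*} [Fintype V] {G : SimpleGraph V}

lemma sum_dist_eq_sum_card_smul {M : Type*} [AddCommMonoid M] (hD : G.ediam ≠ ⊤) (f : ℕ → M)
    (u : V) :
    ∑ w, f (G.dist u w) = ∑ i ∈ range (G.diam + 1), #{w | G.dist u w = i} • f i := by
  rw [← sum_fiberwise_of_maps_to (g := G.dist u) (t := range (G.diam + 1))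
    fun _ _ ↦ mem_range_succ_iff.mpr (G.dist_le_diam hD)]
  refine sum_congr rfl fun i _ ↦ ?_
  rw [sum_congr rfl fun w hw ↦ by rw [(mem_filter.mp hw).2], sum_const]

lemma filter_dist_eq_of_diam_lt (hD : G.ediam ≠ ⊤) {i : ℕ} (hi : G.diam < i) (u : V) :
    ({w | G.dist u w = i} : Finset V) = ∅ :=
  filter_false_of_mem fun _ _ ↦ ((G.dist_le_diam hD).trans_lt hi).ne

variable [DecidableEq V]

lemma Connected.filter_dist_eq_zero (hconn : G.Connected) (u : V) :
    ({w | G.dist u w = 0} : Finset V) = {u} := by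
  ext w
  simp [hconn.dist_eq_zero_iff, eq_comm]

lemma Connected.card_filter_dist_succ_eq (hconn : G.Connected) {g : ℕ → ℝ}
    (hlin : LinearIndependent ℚ (fun j : Fin G.diam => g (j + 1))) {u v : V}
    (hrow : ∑ w, g (G.dist u w) = ∑ w, g (G.dist v w)) (j : Fin G.diam) :
    #{w | G.dist u w = j + 1} = #{w | G.dist v w = j + 1} := by
  have : Nonempty V := hconn.nonempty
  have hD := G.connected_iff_ediam_ne_top.mp hconn
  rw [sum_dist_eq_sum_card_smul hD, sum_dist_eq_sum_card_smul hD, sum_range_succ',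
    sum_range_succ', hconn.filter_dist_eq_zero, hconn.filter_dist_eq_zero, card_singleton,
    card_singleton, add_left_inj, ← Fin.sum_univ_eq_sum_range, ← Fin.sum_univ_eq_sum_range] at hrow
  exact Fintype.linearIndependent_iffₛ.mp (hlin.restrict_scalars' ℕ) _ _ hrow j

variable (G)

lemma energy_insert (g : ℕ → ℝ) {a : V} {s : Finset V} (ha : a ∉ s) :
    energy G g (insert a s) = energy G g s + ∑ y ∈ s, g (G.dist a y) := by
  have hdisj₁ : Disjoint s.offDiag ({a} ×ˢ s) := by
    simp only [Finset.disjoint_left, mem_offDiag, mem_product, mem_singleton]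
    grind
  have hdisj₂ : Disjoint (s.offDiag ∪ {a} ×ˢ s) (s ×ˢ {a}) := by
    simp only [Finset.disjoint_left, mem_union, mem_offDiag, mem_product, mem_singleton]
    grind
  unfold energy
  rw [offDiag_insert ha, sum_union hdisj₂, sum_union hdisj₁, sum_product, sum_product_right,
    sum_singleton, sum_singleton]
  simp_rw [G.dist_comm (v := a)]
  ring

lemma energy_singleton (g : ℕ → ℝ) (a : V) : energy G g {a} = 0 := by
  simp [energy]

lemma isEnergyMinimizer_singleton (g : ℕ → ℝ) (a : V) : IsEnergyMinimizer G g {a} := by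
  intro B hB
  obtain ⟨b, rfl⟩ := card_eq_one.mp hB
  rw [energy_singleton, energy_singleton]

lemma sum_dist_eq_of_isEnergyMinimizer_compl (g : ℕ → ℝ)
    (hcomp : ∀ A, IsEnergyMinimizer G g A → IsEnergyMinimizer G g Aᶜ) (u v : V) :
    ∑ w, g (G.dist u w) = ∑ w, g (G.dist v w) := by
  have hrow (x : V) : ∑ w, g (G.dist x w) = g 0 + (energy G g univ - energy G g {x}ᶜ) := by
    have hx : x ∉ ({x}ᶜ : Finset V) := notMem_compl.mpr (mem_singleton_self x)
    rw [← insert_compl_self x, energy_insert G g hx, sum_insert hx, dist_self]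
    ring
  have hcard : ({u}ᶜ : Finset V).card = ({v}ᶜ : Finset V).card := by simp [card_compl]
  have huv := hcomp _ (G.isEnergyMinimizer_singleton g u) _ hcard.symm
  have hvu := hcomp _ (G.isEnergyMinimizer_singleton g v) _ hcard
  rw [hrow, hrow]
  linarith

end SimpleGraph

open SimpleGraph in
/-- If there is `g` with `{g(1),...,g(D)}` linearly independent over `ℚ` (where `D` is the
diameter) such that the complement of every minimizer of `E_g` is again a minimizer, then
`G` is distance degree regular. -/
theorem stmt_11 {V : Type*} [Fintype V] [DecidableEq V] (G : SimpleGraph V)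
    (hconn : G.Connected) (g : ℕ → ℝ)
    (hlin : LinearIndependent ℚ (fun j : Fin G.diam => g (j + 1)))
    (hcomp : ∀ A : Finset V,
      (∀ B : Finset V, B.card = A.card → energy G g A ≤ energy G g B) →
      (∀ B : Finset V, B.card = Aᶜ.card → energy G g Aᶜ ≤ energy G g B)) :
    ∀ (i : ℕ) (u v : V),
      (Finset.univ.filter (fun w => G.dist u w = i)).card =
        (Finset.univ.filter (fun w => G.dist v w = i)).card := by
  intro i u v
  have : Nonempty V := hconn.nonempty
  have hD := G.connected_iff_ediam_ne_top.mp hconn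
  rcases i with _ | j
  · rw [hconn.filter_dist_eq_zero, hconn.filter_dist_eq_zero, card_singleton, card_singleton]
  by_cases hj : j < G.diam
  · exact hconn.card_filter_dist_succ_eq hlin
      (G.sum_dist_eq_of_isEnergyMinimizer_compl g hcomp u v) ⟨j, hj⟩
  · rw [filter_dist_eq_of_diam_lt hD (by omega), filter_dist_eq_of_diam_lt hD (by omega)]
end

section
/- Let m be even with 2 ≤ m ≤ n. A set A of m vertices of P_n is a maximizer of the Wiener index W among all m-element subsets of {1,...,n} if and only if A = {1,...,m/2} ∪ {n − m/2 + 1,...,n}. -/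
/-!
List the elements of `B` increasingly as `b₀ < ⋯ < b_{m-1}`. The element `bᵢ` is the larger
element of `i` pairs and the smaller one of `m - 1 - i` pairs, so
`W(B) = ∑ᵢ (2i - (m - 1)) bᵢ`. For even `m = 2k` these coefficients are odd, negative for
`i < k` and positive for `i ≥ k`, while `B ⊆ {1, …, n}` forces
`i + 1 ≤ bᵢ ≤ n - (m - 1 - i)`. So every term is maximized, and only then, by taking `bᵢ` at
the lower bound for `i < k` and at the upper bound for `i ≥ k`, which is exactly
`{1, …, k} ∪ {n - k + 1, …, n}`.
-/

/-- The Wiener index of a finite set of vertices of the path `{1,...,n}`: the sum of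
`|u − v|` over unordered pairs of distinct elements. -/
def Wpath (A : Finset ℕ) : ℤ :=
  ∑ p ∈ A.offDiag.filter (fun p => p.1 < p.2), ((p.2 : ℤ) - (p.1 : ℤ))

open Finset

theorem Fin.sum_filter_lt_sub {m : ℕ} (f : Fin m → ℤ) :
    ∑ p ∈ univ.filter (fun p : Fin m × Fin m => p.1 < p.2), (f p.2 - f p.1) =
      ∑ i : Fin m, (2 * (i : ℤ) - (m - 1)) * f i := by
  have hsnd : ∑ p ∈ univ.filter (fun p : Fin m × Fin m => p.1 < p.2), f p.2 =
      ∑ j : Fin m, (j : ℤ) * f j := by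
    rw [sum_filter, ← univ_product_univ, sum_product_right]
    refine sum_congr rfl fun j _ => ?_
    dsimp only
    rw [← sum_filter, Finset.sum_const, filter_gt_eq_Iio, Fin.card_Iio, nsmul_eq_mul]
  have hfst : ∑ p ∈ univ.filter (fun p : Fin m × Fin m => p.1 < p.2), f p.1 =
      ∑ i : Fin m, ((m : ℤ) - 1 - i) * f i := by
    rw [sum_filter, ← univ_product_univ, sum_product]
    refine sum_congr rfl fun i _ => ?_
    dsimp only
    rw [← sum_filter, Finset.sum_const, filter_lt_eq_Ioi, Fin.card_Ioi, nsmul_eq_mul]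
    congr 1
    omega
  rw [sum_sub_distrib, hsnd, hfst, ← sum_sub_distrib]
  exact sum_congr rfl fun i _ => by ring

theorem Wpath_eq_sum_filter_lt {B : Finset ℕ} {m : ℕ} (h : #B = m) :
    Wpath B = ∑ p ∈ univ.filter (fun p : Fin m × Fin m => p.1 < p.2),
      ((B.orderEmbOfFin h p.2 : ℤ) - B.orderEmbOfFin h p.1) := by
  set b := B.orderEmbOfFin h
  symm
  refine sum_nbij (Prod.map b b) ?_ ?_ ?_ fun _ _ => rfl
  · rintro ⟨i, j⟩ hij
    simp only [mem_filter, mem_univ, true_and] at hij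
    simp [b, mem_offDiag, hij.ne, hij]
  · rintro ⟨i, j⟩ - ⟨i', j'⟩ - hij
    simpa using hij
  · rintro ⟨u, v⟩ huv
    simp only [coe_filter, mem_offDiag] at huv
    obtain ⟨⟨hu, hv, -⟩, hlt⟩ := huv
    rw [← mem_coe, ← B.range_orderEmbOfFin h] at hu hv
    obtain ⟨i, rfl⟩ := hu
    obtain ⟨j, rfl⟩ := hv
    exact ⟨(i, j), by simpa using hlt, rfl⟩

theorem Wpath_eq_sum_coeff_mul {B : Finset ℕ} {m : ℕ} (h : #B = m) :
    Wpath B = ∑ i : Fin m, (2 * (i : ℤ) - (m - 1)) * B.orderEmbOfFin h i := by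
  rw [Wpath_eq_sum_filter_lt h]
  exact Fin.sum_filter_lt_sub fun i => (B.orderEmbOfFin h i : ℤ)

theorem Finset.add_one_le_orderEmbOfFin {B : Finset ℕ} {m : ℕ} (h : #B = m) (hB : 0 ∉ B)
    (i : Fin m) : (i : ℕ) + 1 ≤ B.orderEmbOfFin h i := by
  set b := B.orderEmbOfFin h
  have hsub : (Iic i).map b.toEmbedding ⊆ Icc 1 (b i) := by
    intro x hx
    obtain ⟨j, hj, rfl⟩ := mem_map.1 hx
    have hjB : b j ∈ B := B.orderEmbOfFin_mem h j
    have : b j ≠ 0 := fun h0 => hB (h0 ▸ hjB)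
    simp only [mem_Icc]
    exact ⟨Nat.one_le_iff_ne_zero.2 this, b.monotone (mem_Iic.1 hj)⟩
  simpa using card_le_card hsub

theorem Finset.orderEmbOfFin_add_le {B : Finset ℕ} {m n : ℕ} (h : #B = m) (hB : B ⊆ Iic n)
    (i : Fin m) : B.orderEmbOfFin h i + (m - 1 - i) ≤ n := by
  set b := B.orderEmbOfFin h
  have hsub : (Ici i).map b.toEmbedding ⊆ Icc (b i) n := by
    intro x hx
    obtain ⟨j, hj, rfl⟩ := mem_map.1 hx
    simp only [mem_Icc]
    exact ⟨b.monotone (mem_Ici.1 hj), mem_Iic.1 (hB (B.orderEmbOfFin_mem h j))⟩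
  have := card_le_card hsub
  simp only [card_map, Fin.card_Ici, Nat.card_Icc] at this
  have := mem_Iic.1 (hB (B.orderEmbOfFin_mem h i))
  omega

def pathEnds (n k : ℕ) : Finset ℕ := Icc 1 k ∪ Icc (n - k + 1) n

def pathEndsEnum (n k i : ℕ) : ℕ := if i < k then i + 1 else n - 2 * k + 1 + i

theorem pathEnds_subset {n k : ℕ} (hkn : k ≤ n) : pathEnds n k ⊆ Icc 1 n := by
  intro x
  simp only [pathEnds, mem_union, mem_Icc]
  omega

theorem card_pathEnds {n k : ℕ} (hkn : 2 * k ≤ n) : #(pathEnds n k) = 2 * k := by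
  rw [pathEnds, card_union_of_disjoint, Nat.card_Icc, Nat.card_Icc]
  · omega
  · exact disjoint_left.2 fun x hx hx' => by simp only [mem_Icc] at hx hx'; omega

theorem orderEmbOfFin_pathEnds {n k : ℕ} (hkn : 2 * k ≤ n) (i : Fin (2 * k)) :
    (pathEnds n k).orderEmbOfFin (card_pathEnds hkn) i = pathEndsEnum n k i := by
  refine congrFun (orderEmbOfFin_unique (f := fun j : Fin (2 * k) => pathEndsEnum n k j) _
    (fun j => ?_) fun j j' hjj' => ?_).symm i
  · have := j.2
    simp only [pathEndsEnum, pathEnds, mem_union, mem_Icc]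
    split <;> omega
  · have := j'.2
    rw [Fin.lt_def] at hjj'
    simp only [pathEndsEnum]
    split <;> split <;> omega

theorem coeff_mul_le_pathEndsEnum {n k i x : ℕ} (hlo : i + 1 ≤ x)
    (hhi : x + (2 * k - 1 - i) ≤ n) :
    (2 * i - (2 * k - 1) : ℤ) * x ≤ (2 * i - (2 * k - 1)) * pathEndsEnum n k i := by
  unfold pathEndsEnum
  split
  · exact mul_le_mul_of_nonpos_left (by omega) (by omega)
  · exact mul_le_mul_of_nonneg_left (by omega) (by omega)

section Extremal

variable {n k : ℕ} {B : Finset ℕ}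

theorem Wpath_pathEnds (hkn : 2 * k ≤ n) :
    Wpath (pathEnds n k) =
      ∑ i : Fin (2 * k), (2 * (i : ℤ) - (2 * k - 1)) * pathEndsEnum n k i := by
  rw [Wpath_eq_sum_coeff_mul (card_pathEnds hkn)]
  push_cast
  exact sum_congr rfl fun i _ => by rw [orderEmbOfFin_pathEnds hkn]

theorem coeff_mul_orderEmbOfFin_le (hB : B ⊆ Icc 1 n) (h : #B = 2 * k) (i : Fin (2 * k)) :
    (2 * (i : ℤ) - (2 * k - 1)) * B.orderEmbOfFin h i ≤
      (2 * (i : ℤ) - (2 * k - 1)) * pathEndsEnum n k i :=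
  coeff_mul_le_pathEndsEnum (B.add_one_le_orderEmbOfFin h (fun h0 => by simpa using hB h0) i)
    (B.orderEmbOfFin_add_le h (hB.trans Icc_subset_Iic_self) i)

theorem Wpath_le_Wpath_pathEnds (hkn : 2 * k ≤ n) (hB : B ⊆ Icc 1 n) (h : #B = 2 * k) :
    Wpath B ≤ Wpath (pathEnds n k) := by
  rw [Wpath_eq_sum_coeff_mul h, Wpath_pathEnds hkn]
  push_cast
  exact sum_le_sum fun i _ => coeff_mul_orderEmbOfFin_le hB h i

theorem eq_pathEnds_of_Wpath_eq (hkn : 2 * k ≤ n) (hB : B ⊆ Icc 1 n) (h : #B = 2 * k)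
    (hW : Wpath B = Wpath (pathEnds n k)) : B = pathEnds n k := by
  rw [Wpath_eq_sum_coeff_mul h, Wpath_pathEnds hkn] at hW
  push_cast at hW
  rw [sum_eq_sum_iff_of_le fun i _ => coeff_mul_orderEmbOfFin_le hB h i] at hW
  -- the coefficients `2 i - (2 k - 1)` are odd, hence nonzero
  have hb : ∀ i, B.orderEmbOfFin h i = (pathEnds n k).orderEmbOfFin (card_pathEnds hkn) i :=
    fun i => by
      rw [orderEmbOfFin_pathEnds hkn]
      exact_mod_cast mul_left_cancel₀ (by omega) (hW i (mem_univ i))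
  rw [← B.image_orderEmbOfFin_univ h,
    ← (pathEnds n k).image_orderEmbOfFin_univ (card_pathEnds hkn)]
  exact image_congr fun i _ => hb i

end Extremal

theorem stmt_13_general (n m : ℕ) (hmn : m ≤ n) (hev : Even m)
    (A : Finset ℕ) (hA : A ⊆ Finset.Icc 1 n) (hcard : A.card = m) :
    (∀ B : Finset ℕ, B ⊆ Finset.Icc 1 n → B.card = m → Wpath B ≤ Wpath A) ↔
      A = Finset.Icc 1 (m / 2) ∪ Finset.Icc (n - m / 2 + 1) n := by
  obtain ⟨k, rfl⟩ := hev
  rw [show (k + k) / 2 = k by omega]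
  rw [← two_mul] at hmn hcard ⊢
  change _ ↔ A = pathEnds n k
  constructor
  · intro hmax
    have hW := hmax _ (pathEnds_subset (by omega)) (card_pathEnds hmn)
    exact eq_pathEnds_of_Wpath_eq hmn hA hcard
      (le_antisymm (Wpath_le_Wpath_pathEnds hmn hA hcard) hW)
  · rintro rfl B hB hBcard
    exact Wpath_le_Wpath_pathEnds hmn hB hBcard

/-- For even `m` with `2 ≤ m ≤ n`, a set `A` of `m` vertices of `P_n` maximizes the Wiener
index iff `A = {1,...,m/2} ∪ {n − m/2 + 1,...,n}`. -/
theorem stmt_13 (n m : ℕ) (hm : 2 ≤ m) (hmn : m ≤ n) (hev : Even m)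
    (A : Finset ℕ) (hA : A ⊆ Finset.Icc 1 n) (hcard : A.card = m) :
    (∀ B : Finset ℕ, B ⊆ Finset.Icc 1 n → B.card = m → Wpath B ≤ Wpath A) ↔
      A = Finset.Icc 1 (m / 2) ∪ Finset.Icc (n - m / 2 + 1) n :=
  stmt_13_general n m hmn hev A hA hcard
end

section
/- Let m be odd with 2 ≤ m ≤ n. A set A of m vertices of P_n is a maximizer of the Wiener index W if and only if A = {1,...,(m−1)/2} ∪ {j} ∪ {n−(m−1)/2+1,...,n} for some integer j with (m−1)/2 < j < n−(m−1)/2+1. -/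
open Finset

namespace PathWiener

def below (A : Finset ℕ) (a : ℕ) : ℕ := #{x ∈ A | x < a}

def above (A : Finset ℕ) (a : ℕ) : ℕ := #{x ∈ A | a < x}

variable {n : ℕ} {A : Finset ℕ} {a : ℕ}

lemma below_add_above (ha : a ∈ A) : below A a + above A a + 1 = #A := by
  have hunion : {x ∈ A | x < a} ∪ {x ∈ A | a < x} = A.erase a := by
    ext x
    simp only [mem_union, mem_filter, mem_erase]
    grind
  rw [below, above, ← card_union_of_disjoint (disjoint_filter.2 fun _ _ h₁ h₂ => lt_asymm h₁ h₂),
    hunion, card_erase_add_one ha]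

lemma below_strictMonoOn (A : Finset ℕ) : StrictMonoOn (below A) A := fun a ha _ _ hab =>
  card_lt_card <|
    (ssubset_iff_of_subset (monotone_filter_right A fun _ _ (h : _ < a) => h.trans hab)).2
      ⟨a, mem_filter.2 ⟨mem_coe.1 ha, hab⟩, by simp⟩

lemma image_below (A : Finset ℕ) : A.image (below A) = range #A := by
  refine eq_of_subset_of_card_le (fun i hi => ?_) ?_
  · obtain ⟨a, ha, rfl⟩ := mem_image.1 hi
    have := below_add_above ha
    exact mem_range.2 (by omega)
  · rw [card_range, card_image_of_injOn (below_strictMonoOn A).injOn]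

lemma sum_comp_below {M : Type*} [AddCommMonoid M] (A : Finset ℕ) (f : ℕ → M) :
    ∑ a ∈ A, f (below A a) = ∑ i ∈ range #A, f i := by
  rw [← image_below, sum_image (below_strictMonoOn A).injOn]

lemma exists_below_eq {i : ℕ} (hi : i < #A) : ∃ a ∈ A, below A a = i :=
  mem_image.1 (image_below A ▸ mem_range.2 hi)

lemma le_below_of_Icc_subset {c d : ℕ} (h : Icc c d ⊆ A) (hd : d < a) :
    d + 1 - c ≤ below A a := by
  rw [← Nat.card_Icc]
  exact card_le_card fun x hx => mem_filter.2 ⟨h hx, (mem_Icc.1 hx).2.trans_lt hd⟩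

lemma le_above_of_Icc_subset {c d : ℕ} (h : Icc c d ⊆ A) (hc : a < c) :
    d + 1 - c ≤ above A a := by
  rw [← Nat.card_Icc]
  exact card_le_card fun x hx => mem_filter.2 ⟨h hx, hc.trans_le (mem_Icc.1 hx).1⟩

lemma below_add_one_le (hA : A ⊆ Icc 1 n) (ha : a ∈ A) : below A a + 1 ≤ a := by
  have hle : below A a ≤ #(Ico 1 a) := card_le_card fun x hx =>
    mem_Ico.2 ⟨(mem_Icc.1 (hA (mem_filter.1 hx).1)).1, (mem_filter.1 hx).2⟩
  have ha' := mem_Icc.1 (hA ha)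
  rw [Nat.card_Ico] at hle
  omega

lemma add_above_le (hA : A ⊆ Icc 1 n) (ha : a ∈ A) : a + above A a ≤ n := by
  have hle : above A a ≤ #(Ioc a n) := card_le_card fun x hx =>
    mem_Ioc.2 ⟨(mem_filter.1 hx).2, (mem_Icc.1 (hA (mem_filter.1 hx).1)).2⟩
  have ha' := mem_Icc.1 (hA ha)
  rw [Nat.card_Ioc] at hle
  omega

lemma wpath_eq_sum (A : Finset ℕ) :
    Wpath A = ∑ a ∈ A, (a : ℤ) * ((below A a : ℤ) - above A a) := by
  have hpairs : A.offDiag.filter (fun p => p.1 < p.2) = (A ×ˢ A).filter (fun p => p.1 < p.2) := by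
    ext p
    simp only [mem_filter, mem_offDiag, mem_product]
    grind
  have hbelow (v : ℕ) : ∑ u ∈ A, (if u < v then (v : ℤ) else 0) = v * below A v := by
    rw [← sum_filter, sum_const, nsmul_eq_mul, mul_comm, below]
  have habove (u : ℕ) : ∑ v ∈ A, (if u < v then (u : ℤ) else 0) = u * above A u := by
    rw [← sum_filter, sum_const, nsmul_eq_mul, mul_comm, above]
  calc Wpath A
      = ∑ u ∈ A, ∑ v ∈ A, ((if u < v then (v : ℤ) else 0) - if u < v then (u : ℤ) else 0) := by
        rw [Wpath, hpairs, sum_filter, sum_product]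
        refine sum_congr rfl fun u _ => sum_congr rfl fun v _ => ?_
        split_ifs <;> simp
    _ = ∑ a ∈ A, (a : ℤ) * ((below A a : ℤ) - above A a) := by
        simp only [sum_sub_distrib]
        rw [sum_comm]
        simp only [hbelow, habove, mul_sub, sum_sub_distrib]

/-- The maximum of `a * (2 * i + 1 - m)` over `i + 1 ≤ a ≤ n - m + 1 + i`, the range of an element
of rank `i` in an `m`-subset of `{1,...,n}`. -/
def maxContribution (n m i : ℕ) : ℤ :=
  if 2 * (i : ℤ) + 1 < m then ((i : ℤ) + 1) * (2 * i + 1 - m)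
  else ((n : ℤ) - m + 1 + i) * (2 * i + 1 - m)

def IsPushedToEnds (n : ℕ) (A : Finset ℕ) : Prop :=
  ∀ a ∈ A, (below A a < above A a → a = below A a + 1) ∧
    (above A a < below A a → a + above A a = n)

variable {m : ℕ}

lemma contribution_le_maxContribution (hA : A ⊆ Icc 1 n) (hcard : #A = m) (ha : a ∈ A) :
    (a : ℤ) * ((below A a : ℤ) - above A a) ≤ maxContribution n m (below A a) := by
  have hsum : (below A a : ℤ) + above A a + 1 = m := by exact_mod_cast hcard ▸ below_add_above ha
  have hlo : (below A a : ℤ) + 1 ≤ a := by exact_mod_cast below_add_one_le hA ha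
  have hhi : (a : ℤ) + above A a ≤ n := by exact_mod_cast add_above_le hA ha
  unfold maxContribution
  split_ifs with h
  · nlinarith
  · nlinarith

lemma contribution_eq_maxContribution_iff (hcard : #A = m) (ha : a ∈ A) :
    (a : ℤ) * ((below A a : ℤ) - above A a) = maxContribution n m (below A a) ↔
      (below A a < above A a → a = below A a + 1) ∧
        (above A a < below A a → a + above A a = n) := by
  have hsum : (below A a : ℤ) + above A a + 1 = m := by exact_mod_cast hcard ▸ below_add_above ha
  have hcoeff : 2 * (below A a : ℤ) + 1 - m = below A a - above A a := by linarith
  unfold maxContribution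
  rw [hcoeff]
  rcases lt_trichotomy (below A a) (above A a) with h | h | h
  · rw [if_pos (by omega), mul_left_inj' (by omega)]
    omega
  · simp [h]
  · rw [if_neg (by omega), mul_left_inj' (by omega)]
    omega

lemma wpath_le_sum_maxContribution (hA : A ⊆ Icc 1 n) (hcard : #A = m) :
    Wpath A ≤ ∑ i ∈ range m, maxContribution n m i := by
  rw [wpath_eq_sum, ← hcard, ← sum_comp_below, hcard]
  exact sum_le_sum fun a ha => contribution_le_maxContribution hA hcard ha

lemma wpath_eq_sum_maxContribution_iff (hA : A ⊆ Icc 1 n) (hcard : #A = m) :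
    Wpath A = ∑ i ∈ range m, maxContribution n m i ↔ IsPushedToEnds n A := by
  rw [wpath_eq_sum, ← hcard, ← sum_comp_below, hcard,
    sum_eq_sum_iff_of_le fun a ha => contribution_le_maxContribution hA hcard ha]
  exact forall₂_congr fun a ha => contribution_eq_maxContribution_iff hcard ha

def wienerMaximizer (n k j : ℕ) : Finset ℕ := Icc 1 k ∪ {j} ∪ Icc (n - k + 1) n

variable {k j x : ℕ}

lemma mem_wienerMaximizer :
    x ∈ wienerMaximizer n k j ↔ (1 ≤ x ∧ x ≤ k) ∨ x = j ∨ (n - k + 1 ≤ x ∧ x ≤ n) := by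
  simp only [wienerMaximizer, mem_union, mem_Icc, mem_singleton, or_assoc]

lemma wienerMaximizer_subset_Icc (hkj : k < j) (hj : j < n - k + 1) :
    wienerMaximizer n k j ⊆ Icc 1 n := by
  intro x hx
  rw [mem_wienerMaximizer] at hx
  rw [mem_Icc]
  omega

lemma card_wienerMaximizer (hkj : k < j) (hj : j < n - k + 1) :
    #(wienerMaximizer n k j) = 2 * k + 1 := by
  have hdisj₁ : Disjoint (Icc 1 k) {j} := disjoint_singleton_right.2 fun h => by
    rw [mem_Icc] at h; omega
  have hdisj₂ : Disjoint (Icc 1 k ∪ {j}) (Icc (n - k + 1) n) := disjoint_left.2 fun x hx hx' => by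
    simp only [mem_union, mem_Icc, mem_singleton] at hx hx'
    omega
  rw [wienerMaximizer, card_union_of_disjoint hdisj₂, card_union_of_disjoint hdisj₁,
    Nat.card_Icc, Nat.card_Icc, card_singleton]
  omega

lemma isPushedToEnds_wienerMaximizer (hkj : k < j) (hj : j < n - k + 1) :
    IsPushedToEnds n (wienerMaximizer n k j) := by
  have hS := wienerMaximizer_subset_Icc hkj hj
  intro a ha
  have hsum := below_add_above ha
  rw [card_wienerMaximizer hkj hj] at hsum
  have hlo := below_add_one_le hS ha
  have hhi := add_above_le hS ha
  have hleft : Icc 1 k ⊆ wienerMaximizer n k j := subset_union_left.trans subset_union_left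
  have hright : Icc (n - k + 1) n ⊆ wienerMaximizer n k j := subset_union_right
  rcases mem_wienerMaximizer.1 ha with ⟨ha₁, ha₂⟩ | rfl | ⟨ha₁, ha₂⟩
  · have := le_below_of_Icc_subset
      ((Icc_subset_Icc_right (by omega : a - 1 ≤ k)).trans hleft) (by omega : a - 1 < a)
    omega
  · have h₁ := le_below_of_Icc_subset hleft hkj
    have h₂ := le_above_of_Icc_subset hright hj
    omega
  · have := le_above_of_Icc_subset
      ((Icc_subset_Icc_left (by omega : n - k + 1 ≤ a + 1)).trans hright) (by omega : a < a + 1)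
    omega

lemma IsPushedToEnds.exists_eq_wienerMaximizer (hA : A ⊆ Icc 1 n) (hcard : #A = 2 * k + 1)
    (hpush : IsPushedToEnds n A) :
    ∃ j, k < j ∧ j < n - k + 1 ∧ A = wienerMaximizer n k j := by
  have hn : 2 * k + 1 ≤ n := by simpa [hcard] using card_le_card hA
  have hrank {i : ℕ} (hi : i < 2 * k + 1) : ∃ a ∈ A, below A a = i ∧ above A a = 2 * k - i := by
    obtain ⟨a, ha, rfl⟩ := exists_below_eq (hcard ▸ hi)
    have := below_add_above ha
    exact ⟨a, ha, rfl, by omega⟩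
  have hleft {x : ℕ} (hx₁ : 1 ≤ x) (hx₂ : x ≤ k) : x ∈ A := by
    obtain ⟨a, ha, hb, ha'⟩ := hrank (i := x - 1) (by omega)
    have := (hpush a ha).1 (by omega)
    exact (show a = x by omega) ▸ ha
  have hright {x : ℕ} (hx₁ : n - k + 1 ≤ x) (hx₂ : x ≤ n) : x ∈ A := by
    obtain ⟨a, ha, hb, ha'⟩ := hrank (i := 2 * k - (n - x)) (by omega)
    have := (hpush a ha).2 (by omega)
    exact (show a = x by omega) ▸ ha
  obtain ⟨j, hj, hb, ha'⟩ := hrank (i := k) (by omega)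
  have hkj := below_add_one_le hA hj
  have hjn := add_above_le hA hj
  refine ⟨j, by omega, by omega, (eq_of_subset_of_card_le (fun x hx => ?_) ?_).symm⟩
  · rcases mem_wienerMaximizer.1 hx with ⟨hx₁, hx₂⟩ | rfl | ⟨hx₁, hx₂⟩
    exacts [hleft hx₁ hx₂, hj, hright hx₁ hx₂]
  · rw [hcard, card_wienerMaximizer (by omega) (by omega)]

lemma isPushedToEnds_iff (hA : A ⊆ Icc 1 n) (hcard : #A = 2 * k + 1) :
    IsPushedToEnds n A ↔ ∃ j, k < j ∧ j < n - k + 1 ∧ A = wienerMaximizer n k j := by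
  refine ⟨IsPushedToEnds.exists_eq_wienerMaximizer hA hcard, ?_⟩
  rintro ⟨j, hkj, hj, rfl⟩
  exact isPushedToEnds_wienerMaximizer hkj hj

end PathWiener

open Finset PathWiener in
theorem stmt_14_general (n m : ℕ) (hodd : Odd m)
    (A : Finset ℕ) (hA : A ⊆ Finset.Icc 1 n) (hcard : A.card = m) :
    (∀ B : Finset ℕ, B ⊆ Finset.Icc 1 n → B.card = m → Wpath B ≤ Wpath A) ↔
      ∃ j : ℕ, (m - 1) / 2 < j ∧ j < n - (m - 1) / 2 + 1 ∧
        A = Finset.Icc 1 ((m - 1) / 2) ∪ {j} ∪ Finset.Icc (n - (m - 1) / 2 + 1) n := by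
  obtain ⟨k, rfl⟩ := hodd
  rw [show (2 * k + 1 - 1) / 2 = k by omega]
  have hmaximum {B : Finset ℕ} (hB : B ⊆ Icc 1 n) (hBcard : #B = 2 * k + 1) :
      Wpath B = ∑ i ∈ range (2 * k + 1), maxContribution n (2 * k + 1) i ↔
        ∃ j, k < j ∧ j < n - k + 1 ∧ B = wienerMaximizer n k j :=
    (wpath_eq_sum_maxContribution_iff hB hBcard).trans (isPushedToEnds_iff hB hBcard)
  constructor
  · intro hmax
    have hn : 2 * k + 1 ≤ n := by simpa [hcard] using card_le_card hA
    have hS := wienerMaximizer_subset_Icc (n := n) (k := k) (j := k + 1) (by omega) (by omega)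
    have hScard := card_wienerMaximizer (n := n) (k := k) (j := k + 1) (by omega) (by omega)
    refine (hmaximum hA hcard).1 (le_antisymm (wpath_le_sum_maxContribution hA hcard) ?_)
    exact ((hmaximum hS hScard).2 ⟨k + 1, by omega, by omega, rfl⟩).ge.trans (hmax _ hS hScard)
  · rintro ⟨j, hkj, hj, rfl⟩ B hB hBcard
    exact (wpath_le_sum_maxContribution hB hBcard).trans
      ((hmaximum hA hcard).2 ⟨j, hkj, hj, rfl⟩).ge

/-- For odd `m` with `2 ≤ m ≤ n`, a set `A` of `m` vertices of `P_n` maximizes the Wiener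
index iff `A = {1,...,(m−1)/2} ∪ {j} ∪ {n−(m−1)/2+1,...,n}` for some
`(m−1)/2 < j < n−(m−1)/2+1`. -/
theorem stmt_14 (n m : ℕ) (hm : 2 ≤ m) (hmn : m ≤ n) (hodd : Odd m)
    (A : Finset ℕ) (hA : A ⊆ Finset.Icc 1 n) (hcard : A.card = m) :
    (∀ B : Finset ℕ, B ⊆ Finset.Icc 1 n → B.card = m → Wpath B ≤ Wpath A) ↔
      ∃ j : ℕ, (m - 1) / 2 < j ∧ j < n - (m - 1) / 2 + 1 ∧
        A = Finset.Icc 1 ((m - 1) / 2) ∪ {j} ∪ Finset.Icc (n - (m - 1) / 2 + 1) n :=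
  stmt_14_general n m hodd A hA hcard
end

section
/- In the path P_n, every local maximizer of the Wiener index W is a global maximizer: if A ⊆ {1,...,n} with |A| ≥ 2 satisfies W(A) ≥ W(B) for every B obtained from A by replacing one element u ∈ A by an adjacent vertex v ∉ A (|u−v| = 1), then W(A) ≥ W(C) for all C ⊆ {1,...,n} with |C| = |A|. -/
/-!
Cutting `P_n` at the edge `{i, i + 1}` leaves `c_i(A)` elements of `A` on the left and
`|A| - c_i(A)` on the right, and `W(A) = ∑ᵢ c_i(A) (|A| - c_i(A))`. Moving one element across
an edge changes only that cut, so at a local maximizer `|2 c_j(A) - |A|| ≤ 1` at every vertex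
`j ∉ A`. Hence at each edge either `c_i(A)` is as close to `|A| / 2` as an integer can be, or
one whole side of the edge lies in `A`, which makes the cut of any `C` with `|C| = |A|` at least
as unbalanced. So `W(C) ≤ W(A)` holds term by term.
-/

open Finset

namespace Wpath

/-- The number of elements of `A` on the left of the edge `{i, i + 1}` of the path. -/
def cut (A : Finset ℕ) (i : ℕ) : ℕ := #(A.filter (· ≤ i))

lemma cut_mono (A : Finset ℕ) {i j : ℕ} (h : i ≤ j) : cut A i ≤ cut A j :=
  card_le_card fun _ hx => by
    simp only [mem_filter] at hx ⊢
    exact ⟨hx.1, hx.2.trans h⟩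

lemma cut_add_card_filter_lt (A : Finset ℕ) (i : ℕ) : cut A i + #(A.filter (i < ·)) = #A := by
  simpa only [cut, not_le] using card_filter_add_card_filter_not (s := A) (· ≤ i)

lemma cut_insert {A : Finset ℕ} {x : ℕ} (hx : x ∉ A) (i : ℕ) :
    cut (insert x A) i = (if x ≤ i then 1 else 0) + cut A i := by
  simp only [cut, card_filter, sum_insert hx]

lemma cut_erase {A : Finset ℕ} {x : ℕ} (hx : x ∈ A) (i : ℕ) :
    (if x ≤ i then 1 else 0) + cut (A.erase x) i = cut A i := by
  simp only [cut, card_filter]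
  exact add_sum_erase A (fun y => if y ≤ i then 1 else 0) hx

lemma cut_succ_of_notMem {A : Finset ℕ} {i : ℕ} (hi : i + 1 ∉ A) : cut A (i + 1) = cut A i := by
  refine congrArg card (filter_congr fun x hx => ⟨fun h => ?_, fun h => h.trans i.le_succ⟩)
  exact Nat.le_of_lt_succ (h.lt_of_ne (ne_of_mem_of_not_mem hx hi))

/-- Each pair `u < v` is counted once by every edge `{i, i + 1}` with `u ≤ i < v`. -/
lemma eq_sum_cut {A : Finset ℕ} {n : ℕ} (hA : A ⊆ Iic n) :
    Wpath A = ∑ i ∈ range n, (cut A i : ℤ) * (#A - cut A i) := by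
  have hdist : ∀ p ∈ A.offDiag.filter (fun p => p.1 < p.2),
      (p.2 : ℤ) - p.1 = ∑ i ∈ range n, if p.1 ≤ i ∧ i < p.2 then 1 else 0 := by
    intro p hp
    simp only [mem_filter, mem_offDiag] at hp
    have hp2 := mem_Iic.1 (hA hp.1.2.1)
    have hIco : (range n).filter (fun i => p.1 ≤ i ∧ i < p.2) = Ico p.1 p.2 := by
      ext i; simp only [mem_filter, mem_range, mem_Ico]; omega
    rw [sum_boole, hIco, Nat.card_Ico]
    omega
  have hpairs : ∀ i, (A.offDiag.filter (fun p => p.1 < p.2)).filter (fun p => p.1 ≤ i ∧ i < p.2)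
      = A.filter (· ≤ i) ×ˢ A.filter (i < ·) := by
    intro i
    ext ⟨u, v⟩
    simp only [mem_filter, mem_offDiag, mem_product]
    constructor
    · rintro ⟨⟨⟨hu, hv, -⟩, -⟩, hui, hiv⟩
      exact ⟨⟨hu, hui⟩, hv, hiv⟩
    · rintro ⟨⟨hu, hui⟩, hv, hiv⟩
      exact ⟨⟨⟨hu, hv, by omega⟩, by omega⟩, hui, hiv⟩
  rw [Wpath, sum_congr rfl hdist, sum_comm]
  refine sum_congr rfl fun i _ => ?_
  rw [sum_boole, hpairs, card_product, ← cut_add_card_filter_lt A i, cut]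
  push_cast
  ring

lemma card_insert_erase {A : Finset ℕ} {u v : ℕ} (hu : u ∈ A) (hv : v ∉ A) :
    #(insert v (A.erase u)) = #A := by
  rw [card_insert_of_notMem fun h => hv (mem_of_mem_erase h), card_erase_add_one hu]

/-- Moving `u ∈ A` one step to the right only changes the cut at the edge `{u, u + 1}`. -/
lemma shift_right {A : Finset ℕ} {u : ℕ} (hu : u ∈ A) (hu1 : u + 1 ∉ A) :
    Wpath (insert (u + 1) (A.erase u)) = Wpath A + 2 * cut A u - #A - 1 := by
  have hcut : ∀ i, (cut (insert (u + 1) (A.erase u)) i : ℤ) =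
      cut A i + (if u + 1 ≤ i then 1 else 0) - (if u ≤ i then 1 else 0) := by
    intro i
    rw [cut_insert (fun h => hu1 (mem_of_mem_erase h)), ← cut_erase hu i]
    push_cast
    ring
  set N := A.sup id + 1
  have hAN : A ⊆ Iic N := fun x hx => mem_Iic.2 (Nat.le_succ_of_le (le_sup (f := id) hx))
  have hBN : insert (u + 1) (A.erase u) ⊆ Iic N := by
    intro x hx
    rcases mem_insert.1 hx with rfl | hx
    · exact mem_Iic.2 (Nat.succ_le_succ (le_sup (f := id) hu))
    · exact hAN (mem_of_mem_erase hx)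
  have hdiff : Wpath (insert (u + 1) (A.erase u)) - Wpath A = 2 * cut A u - #A - 1 := by
    rw [eq_sum_cut hBN, eq_sum_cut hAN, card_insert_erase hu hu1, ← sum_sub_distrib,
      sum_eq_single_of_mem u (mem_range.2 (Nat.lt_succ_of_le (le_sup (f := id) hu)))]
    · simp only [hcut, le_refl, if_true, Nat.not_succ_le_self, if_false]
      ring
    · intro i _ hi
      rw [hcut]
      rcases Nat.lt_or_gt_of_ne hi with h | h
      · simp only [show ¬ u + 1 ≤ i by omega, show ¬ u ≤ i by omega, if_false]
        ring
      · simp only [show u + 1 ≤ i by omega, show u ≤ i by omega, if_true]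
        ring
  linarith

lemma shift_left {A : Finset ℕ} {v : ℕ} (hv : v ∉ A) (hv1 : v + 1 ∈ A) :
    Wpath (insert v (A.erase (v + 1))) = Wpath A + #A - 1 - 2 * cut A v := by
  have hvA' : v ∉ A.erase (v + 1) := fun h => hv (mem_of_mem_erase h)
  have hA : insert (v + 1) ((insert v (A.erase (v + 1))).erase v) = A := by
    rw [erase_insert hvA', insert_erase hv1]
  have hcut : cut (insert v (A.erase (v + 1))) v = cut A v + 1 := by
    rw [cut_insert hvA', ← cut_erase hv1 v]
    simp only [le_refl, if_true, Nat.not_succ_le_self, if_false]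
    omega
  have hshift := shift_right (mem_insert_self v _) (by simp : v + 1 ∉ insert v (A.erase (v + 1)))
  rw [hA, hcut, card_insert_erase hv1 hv] at hshift
  push_cast at hshift
  linarith

lemma cut_zero {A : Finset ℕ} (h0 : 0 ∉ A) : cut A 0 = 0 :=
  card_eq_zero.2 <| filter_eq_empty_iff.2 fun _ hx hx0 => h0 (Nat.le_zero.1 hx0 ▸ hx)

lemma cut_eq_card {A : Finset ℕ} {n : ℕ} (hA : A ⊆ Iic n) : cut A n = #A :=
  congrArg card <| filter_true_of_mem fun _ hx => mem_Iic.1 (hA hx)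

def IsLocalMax (n : ℕ) (A : Finset ℕ) : Prop :=
  ∀ u ∈ A, ∀ v ∈ Icc 1 n, v ∉ A → (v = u + 1 ∨ u = v + 1) →
    Wpath (insert v (A.erase u)) ≤ Wpath A

namespace IsLocalMax

variable {n : ℕ} {A : Finset ℕ}

lemma two_mul_cut_le_of_succ_notMem (hloc : IsLocalMax n A) {u : ℕ} (hu : u ∈ A)
    (hu1 : u + 1 ∉ A) (hun : u + 1 ≤ n) : 2 * cut A u ≤ #A + 1 := by
  have h := hloc u hu (u + 1) (mem_Icc.2 ⟨Nat.le_add_left 1 u, hun⟩) hu1 (Or.inl rfl)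
  rw [shift_right hu hu1] at h
  omega

lemma card_le_two_mul_cut_add_one_of_succ_mem (hloc : IsLocalMax n A) {v : ℕ}
    (hv : v ∈ Icc 1 n) (hvA : v ∉ A) (hv1 : v + 1 ∈ A) : #A ≤ 2 * cut A v + 1 := by
  have h := hloc (v + 1) hv1 v hv hvA (Or.inr rfl)
  rw [shift_left hvA hv1] at h
  omega

/-- Across a gap of `A`, the cut stays at the cut of the nearest element of `A` on the left. -/
lemma two_mul_cut_le_of_notMem (hloc : IsLocalMax n A) (hA : A ⊆ Icc 1 n) {j : ℕ}
    (hjn : j ≤ n) (hjA : j ∉ A) : 2 * cut A j ≤ #A + 1 := by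
  induction j with
  | zero => rw [cut_zero fun h => by simpa using hA h]; omega
  | succ k ih =>
    rw [cut_succ_of_notMem hjA]
    by_cases hk : k ∈ A
    · exact hloc.two_mul_cut_le_of_succ_notMem hk hjA hjn
    · exact ih (by omega) hk

/-- Across a gap of `A`, the cut stays at the cut of the nearest element of `A` on the right. -/
lemma card_le_two_mul_cut_add_one_of_notMem (hloc : IsLocalMax n A) (hA : A ⊆ Icc 1 n)
    {j : ℕ} (hj : j ∈ Icc 1 n) (hjA : j ∉ A) : #A ≤ 2 * cut A j + 1 := by
  obtain ⟨hj1, hjn⟩ := mem_Icc.1 hj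
  induction hjn using Nat.decreasingInduction with
  | self => rw [cut_eq_card (hA.trans Icc_subset_Iic_self)]; omega
  | of_succ k hk ih =>
    by_cases hk1 : k + 1 ∈ A
    · exact hloc.card_le_two_mul_cut_add_one_of_succ_mem hj hjA hk1
    · rw [← cut_succ_of_notMem hk1]
      exact ih (mem_Icc.2 ⟨by omega, hk⟩) hk1 (by omega)

lemma cut_mul_le (hloc : IsLocalMax n A) (hA : A ⊆ Icc 1 n) {C : Finset ℕ}
    (hC : C ⊆ Icc 1 n) (hCA : #C = #A) (i : ℕ) :
    (cut C i : ℤ) * (#A - cut C i) ≤ cut A i * (#A - cut A i) := by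
  have hbal : (cut C i ≤ cut A i ∧ cut A i + cut C i ≤ #A) ∨
      (cut A i ≤ cut C i ∧ #A ≤ cut A i + cut C i) := by
    by_cases hlow : 2 * cut A i + 1 < #A
    · have hcut_le : cut C i ≤ cut A i := by
        refine card_le_card fun j hj => ?_
        obtain ⟨hjC, hji⟩ := mem_filter.1 hj
        refine mem_filter.2 ⟨by_contra fun hjA => ?_, hji⟩
        have := hloc.card_le_two_mul_cut_add_one_of_notMem hA (hC hjC) hjA
        have := cut_mono A hji
        omega
      omega
    by_cases hhigh : #A + 1 < 2 * cut A i
    · have hcard_gt_le : #(C.filter (i < ·)) ≤ #(A.filter (i < ·)) := by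
        refine card_le_card fun j hj => ?_
        obtain ⟨hjC, hij⟩ := mem_filter.1 hj
        refine mem_filter.2 ⟨by_contra fun hjA => ?_, hij⟩
        have := hloc.two_mul_cut_le_of_notMem hA (mem_Icc.1 (hC hjC)).2 hjA
        have := cut_mono A hij.le
        omega
      have := cut_add_card_filter_lt A i
      have := cut_add_card_filter_lt C i
      omega
    omega
  have hprod : 0 ≤ ((cut A i : ℤ) - cut C i) * (#A - cut A i - cut C i) := by
    rcases hbal with ⟨h₁, h₂⟩ | ⟨h₁, h₂⟩
    · exact mul_nonneg (by omega) (by omega)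
    · exact mul_nonneg_of_nonpos_of_nonpos (by omega) (by omega)
  nlinarith [hprod]

end IsLocalMax

end Wpath

theorem stmt_15_general (n : ℕ) (A : Finset ℕ) (hA : A ⊆ Finset.Icc 1 n)
    (hloc : ∀ u ∈ A, ∀ v ∈ Finset.Icc 1 n, v ∉ A → (v = u + 1 ∨ u = v + 1) →
      Wpath (insert v (A.erase u)) ≤ Wpath A) :
    ∀ C : Finset ℕ, C ⊆ Finset.Icc 1 n → C.card = A.card → Wpath C ≤ Wpath A := by
  intro C hC hCA
  rw [Wpath.eq_sum_cut (hA.trans Icc_subset_Iic_self),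
    Wpath.eq_sum_cut (hC.trans Icc_subset_Iic_self), hCA]
  exact sum_le_sum fun i _ => Wpath.IsLocalMax.cut_mul_le hloc hA hC hCA i

/-- In the path `P_n`, every local maximizer of the Wiener index is a global maximizer. -/
theorem stmt_15 (n : ℕ) (A : Finset ℕ) (hA : A ⊆ Finset.Icc 1 n) (hcard : 2 ≤ A.card)
    (hloc : ∀ u ∈ A, ∀ v ∈ Finset.Icc 1 n, v ∉ A → (v = u + 1 ∨ u = v + 1) →
      Wpath (insert v (A.erase u)) ≤ Wpath A) :
    ∀ C : Finset ℕ, C ⊆ Finset.Icc 1 n → C.card = A.card → Wpath C ≤ Wpath A :=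
  stmt_15_general n A hA hloc
end

section
/- Let A be a set of m vertices in the cycle C_n with 2 ≤ m ≤ n, m odd (or n even and m arbitrary). Then A is a maximizer of the Wiener index W on C_n if and only if A is balanced, i.e., for every partition of ℤ/nℤ into two arcs whose sizes differ by at most one, the numbers of elements of A in the two arcs differ by at most one. -/
/-- Geodesic distance in the cycle `C_n` on vertex set `ℤ/nℤ`. -/
def cycleDist (n : ℕ) (u v : ZMod n) [NeZero n] : ℕ :=
  min (v - u).val (n - (v - u).val)

/-- The Wiener index of a set of vertices of `C_n`: the sum of geodesic distances over
unordered pairs of distinct vertices. -/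
def Wcyc (n : ℕ) [NeZero n] (A : Finset (ZMod n)) : ℕ :=
  (∑ p ∈ A.offDiag, cycleDist n p.1 p.2) / 2

/-- `P` is an arc (a connected set of vertices) of `C_n`. -/
def IsArc (n : ℕ) (P : Finset (ZMod n)) : Prop :=
  ∃ (a : ZMod n) (k : ℕ), P = (Finset.range k).image (fun i : ℕ => a + (i : ZMod n))

/-- `{P, Q}` is an equitable 2-partition of `ℤ/nℤ` with connected blocks. -/
def IsEquitableArcPartition (n : ℕ) [NeZero n] (P Q : Finset (ZMod n)) : Prop :=
  P ∪ Q = Finset.univ ∧ Disjoint P Q ∧ IsArc n P ∧ IsArc n Q ∧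
    |(P.card : ℤ) - (Q.card : ℤ)| ≤ 1

/-- `A` is balanced in `C_n`. -/
def IsBalanced (n : ℕ) [NeZero n] (A : Finset (ZMod n)) : Prop :=
  ∀ P Q : Finset (ZMod n), IsEquitableArcPartition n P Q →
    |((A ∩ P).card : ℤ) - ((A ∩ Q).card : ℤ)| ≤ 1

/-!
Let `H j` be the arc of `⌈n/2⌉` vertices starting at `j`. An ordered pair `(u, v)` is separated
by `H j` (that is, `u ∈ H j` and `v ∉ H j`) for exactly `d(u, v)` values of `j`, so double
counting gives `2 W(B) = ∑ j, |B ∩ H j| * |B \ H j|`. For `|B| = m` every summand is at most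
`⌊m/2⌋ * ⌈m/2⌉`, with equality iff the two counts differ by at most one; and the equitable arc
partitions are exactly the pairs `{H j, (H j)ᶜ}`. Hence `2 W(B) ≤ n ⌊m/2⌋ ⌈m/2⌉`, with equality
iff `B` is balanced. When `m` is odd or `n` is even the set
`{0, …, ⌈m/2⌉ - 1} ∪ {⌈n/2⌉, …, ⌈n/2⌉ + ⌊m/2⌋ - 1}` is balanced, so the bound is attained.
-/

open Finset

lemma ZMod.val_add_cases {n : ℕ} [NeZero n] (a b : ZMod n) :
    (a + b).val = a.val + b.val ∧ a.val + b.val < n ∨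
      (a + b).val = a.val + b.val - n ∧ n ≤ a.val + b.val := by
  rcases lt_or_ge (a.val + b.val) n with h | h
  · exact .inl ⟨ZMod.val_add_of_lt h, h⟩
  · exact .inr ⟨ZMod.val_add_of_le h, h⟩

lemma ZMod.injOn_natCast_of_lt {n : ℕ} {S : Finset ℕ} (hS : ∀ s ∈ S, s < n) :
    Set.InjOn (Nat.cast : ℕ → ZMod n) S := fun x hx y hy hxy => by
  simpa [ZMod.val_cast_of_lt (hS x hx), ZMod.val_cast_of_lt (hS y hy)] using
    congrArg ZMod.val hxy

lemma Finset.card_inter_add_card_inter_compl {α : Type*} [Fintype α] [DecidableEq α]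
    (s t : Finset α) : #(s ∩ t) + #(s ∩ tᶜ) = #s := by
  rw [← sdiff_eq_inter_compl, card_inter_add_card_sdiff]

theorem Finset.even_sum_offDiag_of_symm {α M : Type*} [DecidableEq α] [AddCommMonoid M]
    (s : Finset α) (f : α → α → M) (hf : ∀ a b, f a b = f b a) :
    Even (∑ p ∈ s.offDiag, f p.1 p.2) := by
  classical
  -- any linear order splits the off-diagonal into two halves exchanged by `Prod.swap`
  let _ : LinearOrder α := IsWellOrder.linearOrder WellOrderingRel
  rw [← sum_filter_add_sum_filter_not s.offDiag (fun p => p.1 < p.2)]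
  have hswap : ∑ p ∈ s.offDiag with ¬p.1 < p.2, f p.1 p.2
      = ∑ p ∈ s.offDiag with p.1 < p.2, f p.1 p.2 := by
    refine sum_nbij' Prod.swap Prod.swap ?_ ?_ (fun _ _ => rfl) (fun _ _ => rfl)
      (fun p _ => hf _ _)
    · simp only [mem_filter, mem_offDiag, Prod.fst_swap, Prod.snd_swap, not_lt]
      exact fun p ⟨⟨h1, h2, hne⟩, hle⟩ =>
        ⟨⟨h2, h1, Ne.symm hne⟩, lt_of_le_of_ne hle (Ne.symm hne)⟩
    · simp only [mem_filter, mem_offDiag, Prod.fst_swap, Prod.snd_swap, not_lt]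
      exact fun p ⟨⟨h1, h2, hne⟩, hlt⟩ => ⟨⟨h2, h1, Ne.symm hne⟩, hlt.le⟩
  rw [hswap]
  exact ⟨_, rfl⟩

namespace CycleWiener

section NearlyEqualProduct

variable {c d x y : ℕ}

/-- No integer lies strictly between `c` and `d`, so the two factors have the same sign. -/
lemma sub_mul_sub_nonneg_of_le_succ (hcd : c ≤ d) (hdc : d ≤ c + 1) :
    0 ≤ ((c : ℤ) - x) * ((d : ℤ) - x) := by
  rcases le_or_gt x c with h | h
  · exact mul_nonneg (by omega) (by omega)
  · exact mul_nonneg_of_nonpos_of_nonpos (by omega) (by omega)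

lemma mul_sub_mul_eq_of_add_eq (hs : x + y = c + d) :
    (c * d : ℤ) - x * y = ((c : ℤ) - x) * ((d : ℤ) - x) := by
  have : (x : ℤ) + y = c + d := by exact_mod_cast hs
  linear_combination (-(x : ℤ)) * this

theorem mul_le_mul_of_add_eq (hs : x + y = c + d) (hcd : c ≤ d) (hdc : d ≤ c + 1) :
    x * y ≤ c * d := by
  have := mul_sub_mul_eq_of_add_eq hs
  have := sub_mul_sub_nonneg_of_le_succ (x := x) hcd hdc
  zify; linarith

theorem mul_eq_mul_iff_of_add_eq (hs : x + y = c + d) :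
    x * y = c * d ↔ x = c ∨ x = d := by
  have key := mul_sub_mul_eq_of_add_eq hs
  constructor
  · intro h
    rw [← Nat.cast_mul, ← Nat.cast_mul, h, sub_self, eq_comm, mul_eq_zero] at key
    omega
  · rintro (rfl | rfl)
    · rw [Nat.add_left_cancel hs]
    · rw [show y = c by omega, mul_comm]

end NearlyEqualProduct

lemma card_Ico_union_Ico_inter_Ico {a b c d e f : ℕ} (hbc : b ≤ c) :
    #((Ico a b ∪ Ico c d) ∩ Ico e f) = (min b f - max a e) + (min d f - max c e) := by
  rw [union_inter_distrib_right, card_union_of_disjoint, Ico_inter_Ico, Ico_inter_Ico,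
    Nat.card_Ico, Nat.card_Ico]
  exact disjoint_left.2 fun x hx hx' => by
    simp only [mem_inter, mem_Ico] at hx hx'
    omega

section Cycle

variable {n : ℕ} [NeZero n]

def arc (n : ℕ) (a : ZMod n) (k : ℕ) : Finset (ZMod n) :=
  (range k).image fun i : ℕ => a + (i : ZMod n)

lemma mem_arc {a v : ZMod n} {k : ℕ} (hk : k ≤ n) : v ∈ arc n a k ↔ (v - a).val < k := by
  simp only [arc, mem_image, mem_range]
  constructor
  · rintro ⟨i, hi, rfl⟩
    rwa [add_sub_cancel_left, ZMod.val_cast_of_lt (hi.trans_le hk)]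
  · exact fun hv => ⟨(v - a).val, hv, by rw [ZMod.natCast_zmod_val, add_sub_cancel]⟩

lemma arc_eq_univ {a : ZMod n} {k : ℕ} (hk : n ≤ k) : arc n a k = univ :=
  eq_univ_of_forall fun v => by
    simp only [arc, mem_image, mem_range]
    exact ⟨(v - a).val, (ZMod.val_lt _).trans_le hk, by rw [ZMod.natCast_zmod_val, add_sub_cancel]⟩

lemma card_arc (a : ZMod n) (k : ℕ) : #(arc n a k) = min k n := by
  rcases le_or_gt k n with hk | hk
  · rw [arc, card_image_of_injOn, card_range, min_eq_left hk]
    intro i hi i' hi' he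
    have := congrArg ZMod.val (add_left_cancel he)
    rwa [ZMod.val_cast_of_lt ((mem_range.1 hi).trans_le hk),
      ZMod.val_cast_of_lt ((mem_range.1 hi').trans_le hk)] at this
  · rw [arc_eq_univ hk.le, card_univ, ZMod.card, min_eq_right hk.le]

lemma IsArc.eq_arc_card {P : Finset (ZMod n)} (hP : IsArc n P) : ∃ a, P = arc n a #P := by
  obtain ⟨a, k, hP⟩ := hP
  change P = arc n a k at hP
  subst hP
  refine ⟨a, ?_⟩
  rw [card_arc]
  rcases le_or_gt k n with hk | hk
  · rw [min_eq_left hk]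
  · rw [min_eq_right hk.le]
    exact (arc_eq_univ hk.le).trans (arc_eq_univ le_rfl).symm

lemma compl_arc (a : ZMod n) {k : ℕ} (hk : k ≤ n) :
    (arc n a k)ᶜ = arc n (a + (k : ZMod n)) (n - k) := by
  ext v
  rw [mem_compl, mem_arc hk, mem_arc (Nat.sub_le n k), not_lt]
  have hsplit : v - a = (v - (a + k)) + (k : ZMod n) := by ring
  rw [hsplit]
  have hy := ZMod.val_lt (v - (a + (k : ZMod n)))
  rcases eq_or_lt_of_le hk with rfl | hk
  · simp [ZMod.val_lt]
  · have hkval : (k : ZMod n).val = k := ZMod.val_cast_of_lt hk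
    rcases ZMod.val_add_cases (v - (a + (k : ZMod n))) (k : ZMod n) with h | h <;> omega

lemma mem_arc_iff_val {a v : ZMod n} {k : ℕ} (hk : k ≤ n) :
    v ∈ arc n a k ↔ a.val ≤ v.val ∧ v.val < a.val + k ∨ v.val + n < a.val + k := by
  rw [mem_arc hk]
  have hsplit : v = (v - a) + a := by ring
  have hx := ZMod.val_lt (v - a)
  conv_rhs => rw [hsplit]
  rcases ZMod.val_add_cases (v - a) a with h | h <;> omega

def halfArc (n : ℕ) (j : ZMod n) : Finset (ZMod n) := arc n j ((n + 1) / 2)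

lemma succ_div_two_le : (n + 1) / 2 ≤ n := by have := NeZero.pos n; omega

lemma card_halfArc (j : ZMod n) : #(halfArc n j) = (n + 1) / 2 := by
  rw [halfArc, card_arc, min_eq_left succ_div_two_le]

lemma card_compl_halfArc (j : ZMod n) : #(halfArc n j)ᶜ = n / 2 := by
  rw [card_compl, card_halfArc, ZMod.card]; omega

lemma isEquitableArcPartition_halfArc (j : ZMod n) :
    IsEquitableArcPartition n (halfArc n j) (halfArc n j)ᶜ := by
  refine ⟨union_compl _, disjoint_compl_right, ⟨j, _, rfl⟩, ?_, ?_⟩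
  · rw [halfArc, compl_arc j succ_div_two_le]; exact ⟨_, _, rfl⟩
  · rw [card_halfArc, card_compl_halfArc, abs_le]; omega

lemma IsArc.eq_halfArc {P : Finset (ZMod n)} (hP : IsArc n P) (hcard : #P = (n + 1) / 2) :
    ∃ j, P = halfArc n j := by
  obtain ⟨j, hj⟩ := IsArc.eq_arc_card hP
  exact ⟨j, by rw [hj, hcard, halfArc]⟩

lemma IsEquitableArcPartition.exists_halfArc {P Q : Finset (ZMod n)}
    (h : IsEquitableArcPartition n P Q) :
    ∃ j, P = halfArc n j ∧ Q = (halfArc n j)ᶜ ∨ Q = halfArc n j ∧ P = (halfArc n j)ᶜ := by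
  obtain ⟨hU, hD, hP, hQ, hcard⟩ := h
  have hPQ : IsCompl P Q := .of_eq (disjoint_iff.1 hD) hU
  have hsum : #P + #Q = n := by
    rw [← card_union_of_disjoint hD, hU, card_univ, ZMod.card]
  rw [abs_le] at hcard
  rcases (by omega : #P = (n + 1) / 2 ∨ #Q = (n + 1) / 2) with hPh | hQh
  · obtain ⟨j, rfl⟩ := IsArc.eq_halfArc hP hPh
    exact ⟨j, .inl ⟨rfl, hPQ.symm.eq_compl⟩⟩
  · obtain ⟨j, rfl⟩ := IsArc.eq_halfArc hQ hQh
    exact ⟨j, .inr ⟨rfl, hPQ.eq_compl⟩⟩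

theorem isBalanced_iff_halfArc (A : Finset (ZMod n)) :
    IsBalanced n A ↔
      ∀ j, |(#(A ∩ halfArc n j) : ℤ) - #(A ∩ (halfArc n j)ᶜ)| ≤ 1 := by
  refine ⟨fun hA j => hA _ _ (isEquitableArcPartition_halfArc j), fun hA P Q hPQ => ?_⟩
  obtain ⟨j, ⟨rfl, rfl⟩ | ⟨rfl, rfl⟩⟩ := IsEquitableArcPartition.exists_halfArc hPQ
  · exact hA j
  · rw [abs_sub_comm]; exact hA j

theorem card_filter_mem_halfArc_not_mem (u v : ZMod n) :
    #{j | u ∈ halfArc n j ∧ v ∉ halfArc n j} = cycleDist n u v := by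
  set h := (n + 1) / 2
  set k := (v - u).val
  have hkn : k < n := ZMod.val_lt _
  have hsplit : ∀ j : ZMod n, v - j = (v - u) + (u - j) := fun j => by ring
  have hcard : #{j | u ∈ halfArc n j ∧ v ∉ halfArc n j} = #(Ico (h - k) (min h (n - k))) := by
    refine card_nbij' (fun j => (u - j).val) (fun x => u - x) ?_ ?_ ?_ ?_
    · intro j hj
      simp only [coe_filter, mem_univ, true_and, Set.mem_ofPred_eq, halfArc,
        mem_arc succ_div_two_le, hsplit j] at hj
      simp only [coe_Ico, Set.mem_Ico]
      have := ZMod.val_lt (u - j)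
      rcases ZMod.val_add_cases (v - u) (u - j) with hc | hc <;> omega
    · intro x hx
      simp only [coe_Ico, Set.mem_Ico] at hx
      have hxval : (x : ZMod n).val = x := ZMod.val_cast_of_lt (by omega)
      simp only [coe_filter, mem_univ, true_and, Set.mem_ofPred_eq, halfArc,
        mem_arc succ_div_two_le, hsplit (u - x), sub_sub_cancel, hxval]
      rcases ZMod.val_add_cases (v - u) (x : ZMod n) with hc | hc <;> omega
    · intro j _
      simp only [ZMod.natCast_zmod_val, sub_sub_cancel]
    · intro x hx
      simp only [coe_Ico, Set.mem_Ico] at hx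
      simp only [sub_sub_cancel, ZMod.val_cast_of_lt (show x < n by omega)]
  rw [hcard, Nat.card_Ico, cycleDist]
  omega

lemma cycleDist_self (u : ZMod n) : cycleDist n u u = 0 := by simp [cycleDist]

lemma cycleDist_comm (u v : ZMod n) : cycleDist n u v = cycleDist n v u := by
  rw [cycleDist, cycleDist, ← neg_sub v u, ZMod.neg_val]
  split_ifs with h
  · simp [h]
  · have := ZMod.val_lt (v - u); omega

theorem sum_card_inter_halfArc_mul (B : Finset (ZMod n)) :
    ∑ j, #(B ∩ halfArc n j) * #(B ∩ (halfArc n j)ᶜ) = ∑ p ∈ B.offDiag, cycleDist n p.1 p.2 :=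
  calc ∑ j, #(B ∩ halfArc n j) * #(B ∩ (halfArc n j)ᶜ)
      = ∑ j, #{p ∈ B ×ˢ B | p.1 ∈ halfArc n j ∧ p.2 ∉ halfArc n j} := by
        refine sum_congr rfl fun j _ => ?_
        rw [← sdiff_eq_inter_compl, ← filter_mem_eq_inter, ← filter_notMem_eq_sdiff,
          ← card_product, ← filter_product]
    _ = ∑ p ∈ B ×ˢ B, #{j | p.1 ∈ halfArc n j ∧ p.2 ∉ halfArc n j} := by
        simp only [card_filter]; exact sum_comm
    _ = ∑ p ∈ B ×ˢ B, cycleDist n p.1 p.2 := by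
        simp only [card_filter_mem_halfArc_not_mem]
    _ = ∑ p ∈ B.offDiag, cycleDist n p.1 p.2 := by
        refine (sum_subset (fun _ hp => mem_product.2
          ⟨(mem_offDiag.1 hp).1, (mem_offDiag.1 hp).2.1⟩) fun p hp hp' => ?_).symm
        obtain ⟨h1, h2⟩ := mem_product.1 hp
        rw [show p.1 = p.2 by simpa [mem_offDiag, h1, h2] using hp', cycleDist_self]

theorem two_mul_wcyc (B : Finset (ZMod n)) :
    2 * Wcyc n B = ∑ j, #(B ∩ halfArc n j) * #(B ∩ (halfArc n j)ᶜ) := by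
  rw [Wcyc, Nat.two_mul_div_two_of_even (even_sum_offDiag_of_symm _ _ cycleDist_comm),
    sum_card_inter_halfArc_mul]

theorem two_mul_wcyc_le (B : Finset (ZMod n)) :
    2 * Wcyc n B ≤ n * (#B / 2 * ((#B + 1) / 2)) := by
  rw [two_mul_wcyc]
  calc ∑ j, #(B ∩ halfArc n j) * #(B ∩ (halfArc n j)ᶜ)
      ≤ ∑ _j : ZMod n, #B / 2 * ((#B + 1) / 2) := sum_le_sum fun j _ =>
        mul_le_mul_of_add_eq (by rw [card_inter_add_card_inter_compl]; omega) (by omega) (by omega)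
    _ = n * (#B / 2 * ((#B + 1) / 2)) := by rw [sum_const, card_univ, ZMod.card, smul_eq_mul]

theorem two_mul_wcyc_eq_iff_isBalanced (B : Finset (ZMod n)) :
    2 * Wcyc n B = n * (#B / 2 * ((#B + 1) / 2)) ↔ IsBalanced n B := by
  have hsum := card_inter_add_card_inter_compl B
  have hconst : ∑ _j : ZMod n, #B / 2 * ((#B + 1) / 2) = n * (#B / 2 * ((#B + 1) / 2)) := by
    rw [sum_const, card_univ, ZMod.card, smul_eq_mul]
  rw [two_mul_wcyc, isBalanced_iff_halfArc, ← hconst, sum_eq_sum_iff_of_le fun j _ =>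
      mul_le_mul_of_add_eq (by rw [hsum]; omega) (by omega) (by omega)]
  refine forall_congr' fun j => ?_
  rw [mul_eq_mul_iff_of_add_eq (by rw [hsum]; omega), abs_le]
  simp only [mem_univ, true_implies]
  have := hsum (halfArc n j)
  omega

lemma card_image_natCast_inter_arc {S : Finset ℕ} (hS : ∀ s ∈ S, s < n) (j : ZMod n) {k : ℕ}
    (hk : k ≤ n) :
    #(S.image (Nat.cast : ℕ → ZMod n) ∩ arc n j k)
      = #(S ∩ Ico j.val (j.val + k)) + #(S ∩ Ico 0 (j.val + k - n)) := by
  have hfilter : S.filter (fun s : ℕ => (s : ZMod n) ∈ arc n j k)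
      = S ∩ Ico j.val (j.val + k) ∪ S ∩ Ico 0 (j.val + k - n) := by
    ext s
    simp only [mem_filter, mem_union, mem_inter, mem_Ico, ← and_or_left]
    refine and_congr_right fun hs => ?_
    rw [mem_arc_iff_val hk, ZMod.val_cast_of_lt (hS s hs)]
    omega
  rw [← filter_mem_eq_inter, filter_image,
    card_image_of_injOn ((ZMod.injOn_natCast_of_lt hS).mono (filter_subset _ _)),
    hfilter, card_union_of_disjoint]
  exact disjoint_left.2 fun x hx hx' => by
    simp only [mem_inter, mem_Ico] at hx hx'
    omega

theorem exists_card_eq_isBalanced {m : ℕ} (hmn : m ≤ n) (hpar : Odd m ∨ Even n) :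
    ∃ B : Finset (ZMod n), #B = m ∧ IsBalanced n B := by
  set h := (n + 1) / 2
  set S := Ico 0 ((m + 1) / 2) ∪ Ico h (h + m / 2) with hSdef
  have hS : ∀ s ∈ S, s < n := fun s hs => by
    simp only [hSdef, mem_union, mem_Ico] at hs; omega
  have hpar' : m % 2 = 1 ∨ n % 2 = 0 := by
    rcases hpar with ⟨r, hr⟩ | ⟨r, hr⟩ <;> omega
  have hcardS : #S = m := by
    rw [hSdef, card_union_of_disjoint, Nat.card_Ico, Nat.card_Ico]
    · omega
    · exact disjoint_left.2 fun x hx hx' => by simp only [mem_Ico] at hx hx'; omega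
  refine ⟨S.image Nat.cast, by rw [card_image_of_injOn (ZMod.injOn_natCast_of_lt hS), hcardS],
    (isBalanced_iff_halfArc _).2 fun j => ?_⟩
  have hcompl := card_inter_add_card_inter_compl (S.image (Nat.cast : ℕ → ZMod n)) (halfArc n j)
  rw [card_image_of_injOn (ZMod.injOn_natCast_of_lt hS), hcardS] at hcompl
  have hj := ZMod.val_lt j
  rw [halfArc, card_image_natCast_inter_arc hS j succ_div_two_le, hSdef,
    card_Ico_union_Ico_inter_Ico (by omega), card_Ico_union_Ico_inter_Ico (by omega)] at hcompl ⊢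
  rw [abs_le]
  omega

end Cycle

end CycleWiener

open CycleWiener in
theorem stmt_16_general (n m : ℕ) [NeZero n]
    (hpar : Odd m ∨ Even n) (A : Finset (ZMod n)) (hcard : A.card = m) :
    (∀ B : Finset (ZMod n), B.card = m → Wcyc n B ≤ Wcyc n A) ↔ IsBalanced n A := by
  have hmn : m ≤ n := hcard ▸ (card_le_univ A).trans_eq (ZMod.card n)
  obtain ⟨B₀, hB₀, hbal₀⟩ := exists_card_eq_isBalanced hmn hpar
  have hW₀ := (two_mul_wcyc_eq_iff_isBalanced B₀).2 hbal₀
  have hbound (B : Finset (ZMod n)) (hB : #B = m) :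
      2 * Wcyc n B ≤ n * (m / 2 * ((m + 1) / 2)) := hB ▸ two_mul_wcyc_le B
  rw [hB₀] at hW₀
  rw [← two_mul_wcyc_eq_iff_isBalanced, hcard]
  refine ⟨fun hmax => ?_, fun hA B hB => ?_⟩
  · have := hmax B₀ hB₀
    have := hbound A hcard
    omega
  · have := hbound B hB
    omega

/-- For `2 ≤ m ≤ n` with `m` odd or `n` even: a set `A` of `m` vertices of `C_n`
maximizes the Wiener index iff `A` is balanced. -/
theorem stmt_16 (n m : ℕ) [NeZero n] (hm : 2 ≤ m) (hmn : m ≤ n)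
    (hpar : Odd m ∨ Even n) (A : Finset (ZMod n)) (hcard : A.card = m) :
    (∀ B : Finset (ZMod n), B.card = m → Wcyc n B ≤ Wcyc n A) ↔ IsBalanced n A :=
  stmt_16_general n m hpar A hcard
end

section
/- Let n be odd and m even with 2 ≤ m ≤ n. Every maximizer A of the Wiener index W on C_n with |A| = m is not balanced: there exists an equitable 2-partition {P,Q} of ℤ/nℤ into two arcs with sizes differing by at most one such that |A∩P| and |A∩Q| differ by at least 2. -/
/-
If `A` were balanced, then for `n = 2k + 1` the arc of length `k` starting at any vertex would
contain exactly `m / 2` points of `A`: its count and that of the complementary arc of length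
`k + 1` have even sum `m` and differ by at most one. Every vertex lies in exactly `k` of these
`n` arcs, so double counting gives `n * (m / 2) = k * m`, which is impossible for odd `n`.
-/

open Finset

def cycleArc (n : ℕ) (a : ZMod n) (k : ℕ) : Finset (ZMod n) :=
  (range k).image fun i : ℕ => a + i

section CycleArc

variable {n : ℕ}

lemma injOn_add_natCast_range (a : ZMod n) {k : ℕ} (hk : k ≤ n) :
    Set.InjOn (fun i : ℕ => a + i) (range k) := by
  intro i hi j hj h
  have := congrArg ZMod.val (add_left_cancel h)
  rwa [ZMod.val_cast_of_lt ((mem_range.mp hi).trans_le hk),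
    ZMod.val_cast_of_lt ((mem_range.mp hj).trans_le hk)] at this

lemma card_cycleArc (a : ZMod n) {k : ℕ} (hk : k ≤ n) : (cycleArc n a k).card = k := by
  rw [cycleArc, card_image_of_injOn (injOn_add_natCast_range a hk), card_range]

lemma disjoint_cycleArc_cycleArc_add (a : ZMod n) {k l : ℕ} (hkl : k + l ≤ n) :
    Disjoint (cycleArc n a k) (cycleArc n (a + k) l) := by
  simp only [cycleArc, disjoint_left, mem_image, mem_range]
  rintro _ ⟨i, hi, rfl⟩ ⟨j, hj, hij⟩
  have : k + j = i := injOn_add_natCast_range a hkl (by simp; omega) (by simp; omega)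
    (by simpa [add_assoc] using hij)
  omega

lemma cycleArc_union_cycleArc_add [NeZero n] (a : ZMod n) {k l : ℕ} (hkl : k + l = n) :
    cycleArc n a k ∪ cycleArc n (a + k) l = univ := by
  apply eq_univ_of_card
  rw [card_union_of_disjoint (disjoint_cycleArc_cycleArc_add a hkl.le),
    card_cycleArc a (by omega), card_cycleArc _ (by omega), ZMod.card, hkl]

lemma isEquitableArcPartition_cycleArc [NeZero n] (a : ZMod n) {k : ℕ} (hn : n = 2 * k + 1) :
    IsEquitableArcPartition n (cycleArc n a k) (cycleArc n (a + k) (k + 1)) := by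
  refine ⟨cycleArc_union_cycleArc_add a (by omega), disjoint_cycleArc_cycleArc_add a (by omega),
    ⟨a, k, rfl⟩, ⟨a + k, k + 1, rfl⟩, ?_⟩
  rw [card_cycleArc a (by omega), card_cycleArc _ (by omega)]
  norm_num

lemma card_inter_cycleArc (A : Finset (ZMod n)) (a : ZMod n) {k : ℕ} (hk : k ≤ n) :
    (A ∩ cycleArc n a k).card = ∑ i ∈ range k, if a + i ∈ A then 1 else 0 := by
  rw [inter_comm, ← filter_mem_eq_inter, cycleArc, filter_image,
    card_image_of_injOn ((injOn_add_natCast_range a hk).mono (coe_subset.mpr (filter_subset _ _))), card_filter]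

lemma sum_card_inter_cycleArc [NeZero n] (A : Finset (ZMod n)) {k : ℕ} (hk : k ≤ n) :
    ∑ a : ZMod n, (A ∩ cycleArc n a k).card = k * A.card := by
  have hshift (i : ZMod n) : ∑ a : ZMod n, (if a + i ∈ A then 1 else 0) = A.card := by
    exact (Equiv.sum_comp (Equiv.addRight i) fun b => if b ∈ A then 1 else 0).trans (by simp)
  simp_rw [card_inter_cycleArc A _ hk]
  rw [sum_comm]
  simp [hshift]

lemma exists_two_mul_card_inter_cycleArc_ne [NeZero n] {k : ℕ} (hn : n = 2 * k + 1)
    {A : Finset (ZMod n)} (hA : A.Nonempty) :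
    ∃ a : ZMod n, 2 * (A ∩ cycleArc n a k).card ≠ A.card := by
  by_contra! hhalf
  have hdouble : n * A.card = 2 * (k * A.card) := by
    rw [← sum_card_inter_cycleArc A (k := k) (by omega), mul_sum]
    simp [hhalf]
  have := card_pos.mpr hA
  subst hn
  nlinarith

end CycleArc

lemma card_inter_add_card_inter_of_partition {α : Type*} [Fintype α] [DecidableEq α]
    {P Q : Finset α} (hunion : P ∪ Q = univ) (hdisj : Disjoint P Q) (A : Finset α) :
    (A ∩ P).card + (A ∩ Q).card = A.card := by
  rw [← card_union_of_disjoint (hdisj.mono inter_subset_right inter_subset_right),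
    ← inter_union_distrib_left, hunion, inter_univ]

theorem stmt_17_general (n m : ℕ) [NeZero n] (hm : 2 ≤ m)
    (hn : Odd n) (hev : Even m) (A : Finset (ZMod n)) (hcard : A.card = m) :
    ∃ P Q : Finset (ZMod n), IsEquitableArcPartition n P Q ∧
      2 ≤ |((A ∩ P).card : ℤ) - ((A ∩ Q).card : ℤ)| := by
  obtain ⟨k, hk⟩ := hn
  obtain ⟨a, ha⟩ := exists_two_mul_card_inter_cycleArc_ne hk (A := A) (card_pos.mp (by omega))
  have hpart := isEquitableArcPartition_cycleArc a hk
  have hsplit := card_inter_add_card_inter_of_partition hpart.1 hpart.2.1 A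
  obtain ⟨t, ht⟩ := hev
  refine ⟨_, _, hpart, ?_⟩
  rw [le_abs]
  omega

/-- For `n` odd and `m` even with `2 ≤ m ≤ n`, every maximizer of the Wiener index on
`C_n` with `m` elements is not balanced: some equitable arc 2-partition splits `A` with
counts differing by at least `2`. -/
theorem stmt_17 (n m : ℕ) [NeZero n] (hm : 2 ≤ m) (hmn : m ≤ n)
    (hn : Odd n) (hev : Even m) (A : Finset (ZMod n)) (hcard : A.card = m)
    (hmax : ∀ B : Finset (ZMod n), B.card = m → Wcyc n B ≤ Wcyc n A) :
    ∃ P Q : Finset (ZMod n), IsEquitableArcPartition n P Q ∧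
      2 ≤ |((A ∩ P).card : ℤ) - ((A ∩ Q).card : ℤ)| :=
  stmt_17_general n m hm hn hev A hcard
end

section
/- Let m, n, r be integers with 1 ≤ m ≤ n, 0 ≤ r ≤ n−1, and let k be an integer with 1 ≤ k ≤ ⌊m/2⌋. Then the sum of geodesic distances d(u,v) over ordered-span-k pairs of the set J^r_{n,m} in C_n equals nk if k < m/2 or n is even, and equals (n−1)k if k = m/2 and n is odd. -/
/-!
Write `e i = ⌊(n i + r)/m⌋`, so that `J^r_{n,m} = {e 0, …, e (m-1)}` and `e (i + m) = e i + n`.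
The gap `d i = e (i + k) - e i` satisfies `|m d i - n k| < m`, and the gaps telescope:
`∑_{i<m} d i = ∑_{j<k} (e (j + m) - e j) = n k`. If `2k < m` or `n` is even, the bound gives
`2 d i ≤ n`, so every distance equals its gap and the sum is `n k`. If `m = 2k` and
`n = 2t + 1`, the bound pins `d i` to `{t, t + 1}`, whose distance in `C_n` is `t` either way,
so the sum is `m t = (n - 1) k`.
-/

open Finset

theorem Finset.sum_range_add_sub_eq_sum_range_add_sub {G : Type*} [AddCommGroup G]
    (f : ℕ → G) (m k : ℕ) :
    ∑ i ∈ range m, (f (i + k) - f i) = ∑ j ∈ range k, (f (j + m) - f j) := by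
  induction k generalizing f with
  | zero => simp
  | succ k ih =>
    have split : ∀ i, f (i + (k + 1)) - f i = (f (i + k + 1) - f (i + 1)) + (f (i + 1) - f i) :=
      fun i => by rw [← add_assoc]; abel
    rw [sum_congr rfl fun i _ => split i, sum_add_distrib, ih (fun i => f (i + 1)),
      sum_range_sub f, sum_range_succ']
    simp only [add_right_comm _ 1 m, zero_add]

theorem cycleDist_natCast_add {n : ℕ} [NeZero n] (a d : ℕ) (hd : d < n) :
    cycleDist n (a : ZMod n) ((a + d : ℕ) : ZMod n) = min d (n - d) := by
  simp only [cycleDist, Nat.cast_add, add_sub_cancel_left, ZMod.val_cast_of_lt hd]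

def evenlySpaced (n m r i : ℕ) : ℕ := (n * i + r) / m

namespace evenlySpaced

variable {n m : ℕ} (r : ℕ)

theorem add_mul_period (hm : 0 < m) (i q : ℕ) :
    evenlySpaced n m r (i + m * q) = evenlySpaced n m r i + n * q := by
  rw [evenlySpaced, evenlySpaced, show n * (i + m * q) + r = n * i + r + n * q * m by ring,
    Nat.add_mul_div_right _ _ hm]

theorem natCast_mod (hm : 0 < m) (j : ℕ) :
    ((evenlySpaced n m r (j % m) : ℕ) : ZMod n) = evenlySpaced n m r j := by
  conv_rhs => rw [← Nat.mod_add_div j m, add_mul_period r hm]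
  push_cast
  simp

theorem mono : Monotone (evenlySpaced n m r) := fun _ _ hij =>
  Nat.div_le_div_right (by gcongr)

theorem sum_gap (hm : 0 < m) (k : ℕ) :
    ∑ i ∈ range m, (evenlySpaced n m r (i + k) - evenlySpaced n m r i) = n * k := by
  have period (j : ℕ) : (evenlySpaced n m r (j + m) : ℤ) - evenlySpaced n m r j = n := by
    have := add_mul_period (n := n) r hm j 1
    rw [mul_one, mul_one] at this
    simp [this]
  rw [← Nat.cast_inj (R := ℤ), Nat.cast_sum, Nat.cast_mul]
  calc _ = ∑ i ∈ range m, ((evenlySpaced n m r (i + k) : ℤ) - evenlySpaced n m r i) :=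
        sum_congr rfl fun i _ => Nat.cast_sub (mono r (Nat.le_add_right i k))
    _ = ∑ j ∈ range k, ((evenlySpaced n m r (j + m) : ℤ) - evenlySpaced n m r j) :=
        sum_range_add_sub_eq_sum_range_add_sub (fun i => (evenlySpaced n m r i : ℤ)) m k
    _ = n * k := by simp [period, mul_comm]

theorem cycleDist_mod (hm : 0 < m) [NeZero n] (i k : ℕ)
    (hd : evenlySpaced n m r (i + k) - evenlySpaced n m r i < n) :
    cycleDist n (evenlySpaced n m r i) (evenlySpaced n m r ((i + k) % m)) =
      min (evenlySpaced n m r (i + k) - evenlySpaced n m r i)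
        (n - (evenlySpaced n m r (i + k) - evenlySpaced n m r i)) := by
  rw [natCast_mod r hm, ← cycleDist_natCast_add _ _ hd,
    Nat.add_sub_cancel' (mono r (Nat.le_add_right i k))]

theorem gap_bounds (hm : 0 < m) (i k : ℕ) :
    m * (evenlySpaced n m r (i + k) - evenlySpaced n m r i) < n * k + m ∧
      n * k < m * (evenlySpaced n m r (i + k) - evenlySpaced n m r i) + m := by
  obtain ⟨d, hd⟩ := Nat.exists_eq_add_of_le (mono r (Nat.le_add_right i k))
  have lo₀ := Nat.mul_div_le (n * i + r) m
  have hi₀ := Nat.lt_mul_div_succ (n * i + r) hm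
  have lo₁ := Nat.mul_div_le (n * (i + k) + r) m
  have hi₁ := Nat.lt_mul_div_succ (n * (i + k) + r) hm
  simp only [evenlySpaced] at hd ⊢
  rw [hd] at lo₁ hi₁ ⊢
  rw [Nat.add_sub_cancel_left]
  constructor <;> nlinarith

end evenlySpaced

theorem two_mul_le_of_mul_lt {n m k d : ℕ} (hmn : m ≤ n) (hkm : 2 * k ≤ m)
    (h : 2 * k < m ∨ Even n) (hd : m * d < n * k + m) : 2 * d ≤ n := by
  rcases hkm.lt_or_eq with hlt | rfl
  · have : m * (2 * d) < m * (n + 1) := by nlinarith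
    have := Nat.lt_of_mul_lt_mul_left this
    omega
  · obtain ⟨t, rfl⟩ := h.resolve_left (lt_irrefl _)
    have : 2 * k * d < 2 * k * (t + 1) := by nlinarith
    have := Nat.lt_of_mul_lt_mul_left this
    omega

theorem eq_or_eq_succ_of_mul_near {t k d : ℕ}
    (hlo : (2 * t + 1) * k < 2 * k * d + 2 * k) (hhi : 2 * k * d < (2 * t + 1) * k + 2 * k) :
    d = t ∨ d = t + 1 := by
  have lo : 2 * k * t < 2 * k * (d + 1) := by nlinarith
  have hi : 2 * k * d < 2 * k * (t + 2) := by nlinarith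
  have := Nat.lt_of_mul_lt_mul_left lo
  have := Nat.lt_of_mul_lt_mul_left hi
  omega

theorem stmt_19_general (n m r k : ℕ) [NeZero n] (hm : 1 ≤ m) (hmn : m ≤ n)
    (hk2 : k ≤ m / 2) :
    ∑ i ∈ Finset.range m,
        cycleDist n (((n * i + r) / m : ℕ) : ZMod n)
          (((n * ((i + k) % m) + r) / m : ℕ) : ZMod n) =
      if 2 * k < m ∨ Even n then n * k else (n - 1) * k := by
  have hkm : 2 * k ≤ m := by omega
  split_ifs with h
  · calc _ = ∑ i ∈ range m, (evenlySpaced n m r (i + k) - evenlySpaced n m r i) :=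
          sum_congr rfl fun i _ => by
            have := two_mul_le_of_mul_lt hmn hkm h (evenlySpaced.gap_bounds r hm i k).1
            have := NeZero.pos n
            refine (evenlySpaced.cycleDist_mod r hm i k (by omega)).trans ?_
            omega
      _ = n * k := evenlySpaced.sum_gap r hm k
  · obtain ⟨rfl, t, rfl⟩ : m = 2 * k ∧ Odd n := by
      rw [not_or, Nat.not_even_iff_odd] at h; exact ⟨by omega, h.2⟩
    calc _ = ∑ i ∈ range (2 * k), t := sum_congr rfl fun i _ => by
          obtain ⟨hi, lo⟩ := evenlySpaced.gap_bounds (n := 2 * t + 1) r hm i k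
          have := eq_or_eq_succ_of_mul_near lo hi
          refine (evenlySpaced.cycleDist_mod r hm i k (by omega)).trans ?_
          omega
      _ = (2 * t + 1 - 1) * k := by
          rw [sum_const, card_range, smul_eq_mul, Nat.add_sub_cancel]
          ring

/-- For `1 ≤ m ≤ n`, `0 ≤ r ≤ n−1`, and `1 ≤ k ≤ ⌊m/2⌋`, the sum of geodesic distances
over span-`k` ordered pairs of the set `J^r_{n,m} = { ⌊(ni+r)/m⌋ : 0 ≤ i < m }` equals
`nk` if `k < m/2` or `n` is even, and `(n−1)k` if `k = m/2` and `n` is odd. -/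
theorem stmt_19 (n m r k : ℕ) [NeZero n] (hm : 1 ≤ m) (hmn : m ≤ n)
    (hr : r ≤ n - 1) (hk1 : 1 ≤ k) (hk2 : k ≤ m / 2) :
    ∑ i ∈ Finset.range m,
        cycleDist n (((n * i + r) / m : ℕ) : ZMod n)
          (((n * ((i + k) % m) + r) / m : ℕ) : ZMod n) =
      if 2 * k < m ∨ Even n then n * k else (n - 1) * k :=
  stmt_19_general n m r k hm hmn hk2
end
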